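/- arXiv:math/0603137 — 3 statements merged into one kernel-verified Lean document; each statement's English description precedes it below -/
import Mathlib

section
/- Let n ≥ 3 and let p, l be integers with p ≥ 4 and l ≥ 2. For p points of ℙ^n(ℂ) and l codimension-two linear subspaces of ℙ^n in generic position (i.e., for every datum in a suitable dense Zariski-open subset of G(n-2,ℙ^n)^l × (ℙ^n)^p), there exists no rational normal curve passing through all p points and (n-1)-secant to all l linear subspaces. -/
/-!
STATEMENT 2: Let `n ≥ 3`, `p ≥ 4`, `l ≥ 2`.  For `p` points of `ℙ^n(ℂ)` and `l`
codimension-two linear subspaces in generic position (genericity encoded by the non-vanishing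
of some nonzero polynomial in the homogeneous coordinates of the points and in the entries of
the 2×(n+1) matrices whose linearly independent rows cut out the subspaces), there is NO
rational normal curve through the `p` points which is `(n-1)`-secant to each of the `l`
subspaces.
-/
noncomputable section

open scoped BigOperators

/-- Complex projective `n`-space. -/
abbrev Pn (n : ℕ) : Type := Projectivization ℂ (Fin (n + 1) → ℂ)

/-- The vector of degree-`n` monomials at `(a, b)` (the affine cone of the Veronese map). -/
def vmon (n : ℕ) (a b : ℂ) : Fin (n + 1) → ℂ := fun i => a ^ (n - (i : ℕ)) * b ^ (i : ℕ)

/-- The rational normal curve in `ℙ^n` obtained by composing the degree-`n` Veronese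
embedding with the linear automorphism given by the (invertible) matrix `g`. -/
def rncOf (n : ℕ) (g : Matrix (Fin (n + 1)) (Fin (n + 1)) ℂ) : Set (Pn n) :=
  {x | ∃ a b : ℂ, (a ≠ 0 ∨ b ≠ 0) ∧
    ∃ h : g.mulVec (vmon n a b) ≠ 0, x = Projectivization.mk ℂ (g.mulVec (vmon n a b)) h}

/-- `C ⊆ ℙ^n` is a rational normal curve. -/
def IsRNC (n : ℕ) (C : Set (Pn n)) : Prop :=
  ∃ g : Matrix (Fin (n + 1)) (Fin (n + 1)) ℂ, IsUnit g ∧ C = rncOf n g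

/-- The linear subspace of `ℙ^n` cut out by the `m` linear forms given by the rows of `A`. -/
def linSet {n m : ℕ} (A : Matrix (Fin m) (Fin (n + 1)) ℂ) : Set (Pn n) :=
  {x | A.mulVec x.rep = 0}

/-- `Λ` meets `C` in exactly `k` distinct points (`k`-secant). -/
def MeetsIn (k : ℕ) {n : ℕ} (Λ C : Set (Pn n)) : Prop :=
  (Λ ∩ C).Finite ∧ (Λ ∩ C).ncard = k

def qeval (n : ℕ) (c : Fin (n+1) → ℂ) (a b : ℂ) : ℂ :=
  ∑ i, c i * (a ^ (n - (i : ℕ)) * b ^ (i : ℕ))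

def Qpoly (n : ℕ) (c : Fin (n+1) → ℂ) : Polynomial ℂ :=
  ∑ i, Polynomial.C (c i) * Polynomial.X ^ (n - (i : ℕ))

lemma Qpoly_natDegree_le (n : ℕ) (c : Fin (n+1) → ℂ) : (Qpoly n c).natDegree ≤ n := by
  apply Polynomial.natDegree_sum_le_of_forall_le
  intro i _
  exact le_trans (Polynomial.natDegree_C_mul_X_pow_le _ _) (Nat.sub_le _ _)

lemma Qpoly_coeff (n : ℕ) (c : Fin (n+1) → ℂ) (i : Fin (n+1)) :
    (Qpoly n c).coeff (n - (i : ℕ)) = c i := by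
  rw [Qpoly, Polynomial.finset_sum_coeff]
  rw [Finset.sum_eq_single i]
  · simp
  · intro j _ hj
    rw [Polynomial.coeff_C_mul, Polynomial.coeff_X_pow, if_neg, mul_zero]
    intro h
    apply hj
    have hj' : (j : ℕ) ≤ n := Fin.is_le j
    have hi' : (i : ℕ) ≤ n := Fin.is_le i
    exact Fin.ext (by omega)
  · simp

lemma qeval_eq_eval (n : ℕ) (c : Fin (n+1) → ℂ) (a b : ℂ) (hb : b ≠ 0) :
    qeval n c a b = b ^ n * (Qpoly n c).eval (a / b) := by
  rw [Qpoly, Polynomial.eval_finset_sum, Finset.mul_sum, qeval]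
  apply Finset.sum_congr rfl
  intro i _
  rw [Polynomial.eval_mul, Polynomial.eval_C, Polynomial.eval_pow, Polynomial.eval_X]
  have h1 : b ^ n = b ^ (n - (i : ℕ)) * b ^ (i : ℕ) := by
    rw [← pow_add, Nat.sub_add_cancel (Fin.is_le i)]
  rw [h1, div_pow]
  field_simp

lemma qeval_b_zero (n : ℕ) (hn : 1 ≤ n) (c : Fin (n+1) → ℂ) (a : ℂ) :
    qeval n c a 0 = c 0 * a ^ n := by
  rw [qeval, Finset.sum_eq_single 0]
  · simp
  · intro j _ hj
    have : (j : ℕ) ≠ 0 := fun h => hj (Fin.ext (by simpa using h))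
    rw [zero_pow this, mul_zero, mul_zero]
  · simp

lemma prod_dvd_of_roots {ι : Type*} [DecidableEq ι] (Q : Polynomial ℂ) (hQ : Q ≠ 0)
    (s : Finset ι) (t : ι → ℂ) (hinj : Set.InjOn t s)
    (hroot : ∀ k ∈ s, Q.IsRoot (t k)) :
    (∏ k ∈ s, (Polynomial.X - Polynomial.C (t k))) ∣ Q := by
  have hM : (s.val.map t).Nodup := by
    refine Multiset.Nodup.map_on ?_ s.nodup
    intro x hx y hy hxy
    exact hinj (by simpa using hx) (by simpa using hy) hxy
  have hle : s.val.map t ≤ Q.roots := by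
    rw [Multiset.le_iff_count]
    intro a
    by_cases ha : a ∈ s.val.map t
    · have h1 : Multiset.count a (s.val.map t) ≤ 1 :=
        Multiset.nodup_iff_count_le_one.mp hM a
      have h2 : 1 ≤ Multiset.count a Q.roots := by
        rw [Nat.one_le_iff_ne_zero, ← Nat.pos_iff_ne_zero, Multiset.count_pos]
        obtain ⟨k, hk, rfl⟩ := Multiset.mem_map.mp ha
        exact Polynomial.mem_roots'.mpr ⟨hQ, hroot k (by simpa using hk)⟩
      omega
    · simp [Multiset.count_eq_zero.mpr ha]
  calc (∏ k ∈ s, (Polynomial.X - Polynomial.C (t k)))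
      = ((s.val.map t).map (fun r => Polynomial.X - Polynomial.C r)).prod := by
        rw [Multiset.map_map]; rfl
    _ ∣ (Q.roots.map (fun r => Polynomial.X - Polynomial.C r)).prod :=
        Multiset.prod_dvd_prod_of_le (Multiset.map_le_map hle)
    _ ∣ Q := Polynomial.prod_multiset_X_sub_C_dvd Q

lemma keyB (n : ℕ) (hn : 1 ≤ n) (c : Fin (n+1) → ℂ) (ua ub : Fin (n-1) → ℂ)
    (hnz : ∀ k, ua k ≠ 0 ∨ ub k ≠ 0)
    (hdist : ∀ k k', k ≠ k' → ua k * ub k' ≠ ub k * ua k')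
    (hroot : ∀ k, qeval n c (ua k) (ub k) = 0) :
    ∃ α β : ℂ, ∀ a b : ℂ,
      qeval n c a b = (∏ k, (ub k * a - ua k * b)) * (α * a + β * b) := by
  by_cases hQ : Qpoly n c = 0
  · refine ⟨0, 0, fun a b => ?_⟩
    have hc : ∀ i, c i = 0 := fun i => by
      rw [← Qpoly_coeff n c i, hQ, Polynomial.coeff_zero]
    simp [qeval, hc]
  by_cases hinf : ∀ k, ub k ≠ 0
  · -- all roots are "finite"
    set t : Fin (n-1) → ℂ := fun k => ua k / ub k with ht
    have htinj : Function.Injective t := by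
      intro k k' h
      by_contra hkk
      apply hdist k k' hkk
      rw [div_eq_div_iff (hinf k) (hinf k')] at h
      rw [h]; ring
    have hRoot : ∀ k, (Qpoly n c).IsRoot (t k) := by
      intro k
      have h1 := qeval_eq_eval n c (ua k) (ub k) (hinf k)
      rw [hroot k] at h1
      have hb := pow_ne_zero n (hinf k)
      exact (mul_eq_zero.mp h1.symm).resolve_left hb
    obtain ⟨R, hR⟩ := prod_dvd_of_roots (Qpoly n c) hQ Finset.univ t htinj.injOn
      (fun k _ => hRoot k)
    set P := ∏ k, (Polynomial.X - Polynomial.C (t k)) with hP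
    have hPmonic : P.Monic :=
      Polynomial.monic_prod_of_monic _ _ fun k _ => Polynomial.monic_X_sub_C _
    have hPdeg : P.natDegree = n - 1 := by
      rw [hP, Polynomial.natDegree_prod _ _ (fun k _ => Polynomial.X_sub_C_ne_zero _)]
      simp
    have hRne : R ≠ 0 := fun h => hQ (by rw [hR, h, mul_zero])
    have hdegR : R.natDegree ≤ 1 := by
      have h1 := Qpoly_natDegree_le n c
      rw [hR, Polynomial.natDegree_mul hPmonic.ne_zero hRne, hPdeg] at h1
      omega
    set r0 := R.coeff 0 with hr0
    set r1 := R.coeff 1 with hr1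
    have hRform : R = Polynomial.C r1 * Polynomial.X + Polynomial.C r0 :=
      Polynomial.eq_X_add_C_of_natDegree_le_one hdegR
    set U := ∏ k, ub k with hU'
    have hU : U ≠ 0 := Finset.prod_ne_zero_iff.mpr (fun k _ => hinf k)
    refine ⟨r1 * U⁻¹, r0 * U⁻¹, fun a b => ?_⟩
    by_cases hb : b = 0
    · subst hb
      rw [qeval_b_zero n hn c a]
      have hc0 : c 0 = r1 := by
        have h1 : c 0 = (Qpoly n c).coeff n := by
          have := Qpoly_coeff n c 0
          simpa using this.symm
        rw [hR, hRform, mul_add, ← mul_assoc] at h1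
        rw [Polynomial.coeff_add] at h1
        have h5 : (P * Polynomial.C r1 * Polynomial.X).coeff n
            = (P * Polynomial.C r1).coeff (n-1) := by
          conv_lhs => rw [show n = (n-1)+1 by omega]
          exact Polynomial.coeff_mul_X _ _
        have h6 : (P * Polynomial.C r1).coeff (n-1) = r1 := by
          rw [Polynomial.coeff_mul_C, ← hPdeg, hPmonic.coeff_natDegree, one_mul]
        have h7 : (P * Polynomial.C r0).coeff n = 0 := by
          rw [Polynomial.coeff_mul_C, Polynomial.coeff_eq_zero_of_natDegree_lt, zero_mul]
          omega
        rw [h5, h6, h7] at h1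
        simpa using h1
      rw [hc0]
      have hprod : (∏ k, (ub k * a - ua k * 0)) = U * a^(n-1) := by
        simp only [mul_zero, sub_zero]
        rw [Finset.prod_mul_distrib, hU']
        simp [Finset.prod_const]
      rw [hprod]
      have han : a ^ n = a^(n-1) * a := by rw [← pow_succ]; congr 1; omega
      rw [han]
      field_simp
      ring
    · -- b ≠ 0
      have e1 : P.eval (a/b) = ∏ k, (a/b - t k) := by
        rw [hP, Polynomial.eval_prod]
        simp
      have e2 : R.eval (a/b) = r1 * (a/b) + r0 := by
        rw [hRform]; simp
      have e3 : ∏ k, (a/b - t k) = (∏ k, (ub k * a - ua k * b)) / (U * b^(n-1)) := by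
        have h4 : ∀ k : Fin (n-1), a/b - t k = (ub k * a - ua k * b) / (ub k * b) := by
          intro k
          show a/b - ua k / ub k = _
          rw [div_sub_div _ _ hb (hinf k)]
          rw [show b * ub k = ub k * b by ring]
          congr 1
          ring
        rw [Finset.prod_congr rfl (fun k _ => h4 k), Finset.prod_div_distrib,
          Finset.prod_mul_distrib]
        congr 1
        simp [hU', Finset.prod_const]
      have hbn : b ^ n = b^(n-1) * b := by rw [← pow_succ]; congr 1; omega
      rw [qeval_eq_eval n c a b hb, hR, Polynomial.eval_mul, e1, e2, e3, hbn]
      have hbpow : b^(n-1) ≠ 0 := pow_ne_zero _ hb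
      field_simp
      have hpc : (∏ x, (ub x * a - b * ua x)) = ∏ x, (a * ub x - b * ua x) :=
        Finset.prod_congr rfl (fun x _ => by ring)
      rw [hpc]
      ring
  · -- one root at infinity
    push_neg at hinf
    obtain ⟨k0, hk0⟩ := hinf
    have hn2 : 2 ≤ n := by
      have h0 : 0 < n - 1 := k0.pos
      omega
    have hua0 : ua k0 ≠ 0 := by
      rcases hnz k0 with h | h
      · exact h
      · exact absurd hk0 h
    have hubk : ∀ k, k ≠ k0 → ub k ≠ 0 := by
      intro k hk hub
      exact hdist k k0 hk (by rw [hk0, hub, mul_zero, zero_mul])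
    have hc0 : c 0 = 0 := by
      have h1 := hroot k0
      rw [hk0, qeval_b_zero n hn c (ua k0)] at h1
      exact (mul_eq_zero.mp h1).resolve_right (pow_ne_zero _ hua0)
    have hdegQ : (Qpoly n c).natDegree ≤ n - 1 := by
      apply Polynomial.natDegree_sum_le_of_forall_le
      intro i _
      by_cases hi : i = 0
      · subst hi
        simp [hc0]
      · refine le_trans (Polynomial.natDegree_C_mul_X_pow_le _ _) ?_
        have : (i : ℕ) ≠ 0 := fun h => hi (Fin.ext (by simpa using h))
        omega
    set s : Finset (Fin (n-1)) := Finset.univ.erase k0 with hs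
    have hscard : s.card = n - 2 := by
      rw [hs, Finset.card_erase_of_mem (Finset.mem_univ _)]
      simp; omega
    set t : Fin (n-1) → ℂ := fun k => ua k / ub k with ht
    have htinj : Set.InjOn t s := by
      intro k hk k' hk' h
      by_contra hkk
      apply hdist k k' hkk
      rw [ht] at h
      have h1 : ub k ≠ 0 := hubk k (Finset.ne_of_mem_erase hk)
      have h2 : ub k' ≠ 0 := hubk k' (Finset.ne_of_mem_erase hk')
      rw [div_eq_div_iff h1 h2] at h
      rw [h]; ring
    have hRoot : ∀ k ∈ s, (Qpoly n c).IsRoot (t k) := by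
      intro k hk
      have hbk : ub k ≠ 0 := hubk k (Finset.ne_of_mem_erase hk)
      have h1 := qeval_eq_eval n c (ua k) (ub k) hbk
      rw [hroot k] at h1
      exact (mul_eq_zero.mp h1.symm).resolve_left (pow_ne_zero n hbk)
    obtain ⟨R, hR⟩ := prod_dvd_of_roots (Qpoly n c) hQ s t htinj hRoot
    set P := ∏ k ∈ s, (Polynomial.X - Polynomial.C (t k)) with hP
    have hPmonic : P.Monic :=
      Polynomial.monic_prod_of_monic _ _ fun k _ => Polynomial.monic_X_sub_C _
    have hPdeg : P.natDegree = n - 2 := by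
      rw [hP, Polynomial.natDegree_prod _ _ (fun k _ => Polynomial.X_sub_C_ne_zero _)]
      simp [hscard]
    have hRne : R ≠ 0 := fun h => hQ (by rw [hR, h, mul_zero])
    have hdegR : R.natDegree ≤ 1 := by
      have h1 := hdegQ
      rw [hR, Polynomial.natDegree_mul hPmonic.ne_zero hRne, hPdeg] at h1
      omega
    set r0 := R.coeff 0 with hr0
    set r1 := R.coeff 1 with hr1
    have hRform : R = Polynomial.C r1 * Polynomial.X + Polynomial.C r0 :=
      Polynomial.eq_X_add_C_of_natDegree_le_one hdegR
    set U := ∏ k ∈ s, ub k with hU'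
    have hU : U ≠ 0 := Finset.prod_ne_zero_iff.mpr
      (fun k hk => hubk k (Finset.ne_of_mem_erase hk))
    refine ⟨r1 * (-(ua k0) * U)⁻¹, r0 * (-(ua k0) * U)⁻¹, fun a b => ?_⟩
    have hsplit : ∀ x : Fin (n-1) → ℂ,
        (∏ k, x k) = x k0 * ∏ k ∈ s, x k := by
      intro x
      rw [hs, Finset.mul_prod_erase _ _ (Finset.mem_univ k0)]
    by_cases hb : b = 0
    · subst hb
      rw [qeval_b_zero n hn c a, hc0, zero_mul]
      rw [hsplit (fun k => ub k * a - ua k * 0)]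
      simp [hk0]
    · have e1 : P.eval (a/b) = ∏ k ∈ s, (a/b - t k) := by
        rw [hP, Polynomial.eval_prod]
        simp
      have e2 : R.eval (a/b) = r1 * (a/b) + r0 := by
        rw [hRform]; simp
      have e3 : ∏ k ∈ s, (a/b - t k)
          = (∏ k ∈ s, (ub k * a - ua k * b)) / (U * b^(n-2)) := by
        have h4 : ∀ k ∈ s, a/b - t k = (ub k * a - ua k * b) / (ub k * b) := by
          intro k hk
          have hbk : ub k ≠ 0 := hubk k (Finset.ne_of_mem_erase hk)
          show a/b - ua k / ub k = _
          rw [div_sub_div _ _ hb hbk]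
          rw [show b * ub k = ub k * b by ring]
          congr 1
          ring
        rw [Finset.prod_congr rfl h4, Finset.prod_div_distrib, Finset.prod_mul_distrib]
        congr 1
        rw [Finset.prod_const, hscard]
      have hbn : b ^ n = b^(n-2) * b * b := by
        rw [mul_assoc, ← pow_two, ← pow_add]
        congr 1; omega
      rw [qeval_eq_eval n c a b hb, hR, Polynomial.eval_mul, e1, e2, e3, hbn]
      rw [hsplit (fun k => ub k * a - ua k * b), hk0]
      have hbpow : b^(n-2) ≠ 0 := pow_ne_zero _ hb
      field_simp
      have hpc : (∏ x ∈ s, (ub x * a - b * ua x)) = ∏ x ∈ s, (a * ub x - b * ua x) :=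
        Finset.prod_congr rfl (fun x _ => by ring)
      rw [hpc]
      ring

lemma vmon_smul (n : ℕ) (t a b : ℂ) : vmon n (t*a) (t*b) = t^n • vmon n a b := by
  funext i
  show (t*a) ^ (n - (i:ℕ)) * (t*b) ^ (i:ℕ) = t^n * (a ^ (n-(i:ℕ)) * b ^ (i:ℕ))
  rw [mul_pow, mul_pow]
  have h1 : t ^ (n - (i:ℕ)) * t ^ (i:ℕ) = t ^ n := by
    rw [← pow_add, Nat.sub_add_cancel (Fin.is_le i)]
  calc t ^ (n-(i:ℕ)) * a ^ (n-(i:ℕ)) * (t ^ (i:ℕ) * b ^ (i:ℕ))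
      = (t ^ (n-(i:ℕ)) * t ^ (i:ℕ)) * (a ^ (n-(i:ℕ)) * b ^ (i:ℕ)) := by ring
    _ = t^n * (a ^ (n-(i:ℕ)) * b ^ (i:ℕ)) := by rw [h1]

lemma cross_exists_smul {a b a' b' : ℂ} (h : a * b' = b * a')
    (h0 : a ≠ 0 ∨ b ≠ 0) (h0' : a' ≠ 0 ∨ b' ≠ 0) :
    ∃ t : ℂ, t ≠ 0 ∧ a = t * a' ∧ b = t * b' := by
  by_cases ha' : a' = 0
  · have hb' : b' ≠ 0 := h0'.resolve_left (by simpa using ha')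
    have ha : a = 0 := by
      have := h
      rw [ha', mul_zero] at this
      exact (mul_eq_zero.mp this).resolve_right hb'
    refine ⟨b / b', ?_, ?_, ?_⟩
    · intro hbb
      rcases h0 with h1 | h1
      · exact h1 ha
      · exact h1 (by field_simp at hbb; simpa using hbb)
    · rw [ha, ha', mul_zero]
    · field_simp
  · refine ⟨a / a', ?_, ?_, ?_⟩
    · intro haa
      have ha : a = 0 := by field_simp at haa; simpa using haa
      have hb : b = 0 := by
        have := h
        rw [ha, zero_mul] at this
        exact (mul_eq_zero.mp this.symm).resolve_right ha'
      rcases h0 with h1 | h1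
      · exact h1 ha
      · exact h1 hb
    · field_simp
    · field_simp
      exact h.symm

lemma mk_eq_of_cross (n : ℕ) (g : Matrix (Fin (n + 1)) (Fin (n + 1)) ℂ)
    (a b a' b' : ℂ) (hab : a ≠ 0 ∨ b ≠ 0) (hab' : a' ≠ 0 ∨ b' ≠ 0)
    (h : a * b' = b * a')
    (hne : g.mulVec (vmon n a b) ≠ 0) (hne' : g.mulVec (vmon n a' b') ≠ 0) :
    Projectivization.mk ℂ (g.mulVec (vmon n a b)) hne
      = Projectivization.mk ℂ (g.mulVec (vmon n a' b')) hne' := by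
  obtain ⟨t, ht0, ha, hb⟩ := cross_exists_smul h hab hab'
  rw [Projectivization.mk_eq_mk_iff]
  refine ⟨Units.mk0 (t^n) (pow_ne_zero n ht0), ?_⟩
  show (t^n : ℂ) • g.mulVec (vmon n a' b') = g.mulVec (vmon n a b)
  rw [← Matrix.mulVec_smul, ← vmon_smul, ← ha, ← hb]

lemma point_extract (n : ℕ) (g : Matrix (Fin (n + 1)) (Fin (n + 1)) ℂ)
    (v : Fin (n + 1) → ℂ) (hv : v ≠ 0)
    (hx : Projectivization.mk ℂ v hv ∈ rncOf n g) :
    ∃ a b t : ℂ, v = t • g.mulVec (vmon n a b) := by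
  obtain ⟨a, b, hab, hne, hmk⟩ := hx
  rw [Projectivization.mk_eq_mk_iff] at hmk
  obtain ⟨u, hu⟩ := hmk
  exact ⟨a, b, (u : ℂ), by rw [← hu]; rfl⟩

lemma secant_data (n : ℕ) (hn : 3 ≤ n) (g : Matrix (Fin (n + 1)) (Fin (n + 1)) ℂ)
    (B : Matrix (Fin 2) (Fin (n + 1)) ℂ)
    (hmeet : MeetsIn (n - 1) (linSet B) (rncOf n g)) :
    ∃ (mf : ℂ → ℂ → ℂ) (α β : Fin 2 → ℂ), ∀ (a b t : ℂ) (w : Fin (n + 1) → ℂ),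
      w = t • g.mulVec (vmon n a b) →
      ∀ r, B.mulVec w r = t * mf a b * (α r * a + β r * b) := by
  obtain ⟨hfin, hcard⟩ := hmeet
  have hcard' : hfin.toFinset.card = n - 1 := by
    rw [← Set.ncard_eq_toFinset_card _ hfin, hcard]
  set e := Finset.equivFinOfCardEq hcard' with he
  -- for each k : Fin (n-1), a point of the intersection
  have hget : ∀ k : Fin (n - 1), ∃ a b : ℂ, (a ≠ 0 ∨ b ≠ 0) ∧
      ∃ h : g.mulVec (vmon n a b) ≠ 0,
        ((e.symm k : hfin.toFinset) : Projectivization ℂ (Fin (n + 1) → ℂ))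
          = Projectivization.mk ℂ (g.mulVec (vmon n a b)) h := by
    intro k
    have hmem : ((e.symm k : hfin.toFinset) : Projectivization ℂ (Fin (n + 1) → ℂ))
        ∈ linSet B ∩ rncOf n g := by
      have := (e.symm k).2
      rw [Set.Finite.mem_toFinset] at this
      exact this
    exact hmem.2
  choose ua ub hab hne hmk using hget
  have hlin : ∀ k : Fin (n - 1),
      ((e.symm k : hfin.toFinset) : Projectivization ℂ (Fin (n + 1) → ℂ)) ∈ linSet B := by
    intro k
    have hmem := (e.symm k).2
    rw [Set.Finite.mem_toFinset] at hmem
    exact hmem.1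
  have hroot : ∀ k, B.mulVec (g.mulVec (vmon n (ua k) (ub k))) = 0 := by
    intro k
    have h1 := hlin k
    set x : Projectivization ℂ (Fin (n + 1) → ℂ) := ↑(e.symm k) with hx
    have h2 : Projectivization.mk ℂ x.rep x.rep_nonzero
        = Projectivization.mk ℂ (g.mulVec (vmon n (ua k) (ub k))) (hne k) := by
      rw [Projectivization.mk_rep]
      exact hmk k
    rw [Projectivization.mk_eq_mk_iff] at h2
    obtain ⟨u, hu⟩ := h2
    have h3 : B.mulVec x.rep = 0 := h1
    rw [← hu] at h3
    have h4 : (u : ℂ) • B.mulVec (g.mulVec (vmon n (ua k) (ub k))) = 0 := by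
      rw [← h3]
      rw [show (u • g.mulVec (vmon n (ua k) (ub k))) = ((u : ℂ) • g.mulVec (vmon n (ua k) (ub k))) from rfl]
      rw [Matrix.mulVec_smul]
    exact (smul_eq_zero.mp h4).resolve_left (Units.ne_zero u)
  have hdist : ∀ k k', k ≠ k' → ua k * ub k' ≠ ub k * ua k' := by
    intro k k' hkk hcross
    apply hkk
    have h1 : Projectivization.mk ℂ (g.mulVec (vmon n (ua k) (ub k))) (hne k)
        = Projectivization.mk ℂ (g.mulVec (vmon n (ua k') (ub k'))) (hne k') :=
      mk_eq_of_cross n g _ _ _ _ (hab k) (hab k') hcross _ _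
    have h2 : (e.symm k : hfin.toFinset) = (e.symm k' : hfin.toFinset) := by
      apply Subtype.ext
      rw [hmk k, hmk k', h1]
    have := e.symm.injective h2
    exact this
  -- apply keyB row-wise
  have hkey : ∀ r : Fin 2, ∃ α β : ℂ, ∀ a b : ℂ,
      qeval n ((B * g) r) a b = (∏ k, (ub k * a - ua k * b)) * (α * a + β * b) := by
    intro r
    apply keyB n (by omega) ((B * g) r) ua ub hab hdist
    intro k
    have h1 := congrFun (hroot k) r
    rw [Matrix.mulVec_mulVec] at h1
    simpa [Matrix.mulVec, dotProduct, qeval, vmon, mul_assoc] using h1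
  choose α β hαβ using hkey
  refine ⟨fun a b => ∏ k, (ub k * a - ua k * b), α, β, ?_⟩
  intro a b t w hw r
  rw [hw]
  have h1 : B.mulVec (t • g.mulVec (vmon n a b)) r = t * B.mulVec (g.mulVec (vmon n a b)) r := by
    rw [Matrix.mulVec_smul]
    rfl
  rw [h1]
  have h2 : B.mulVec (g.mulVec (vmon n a b)) r = qeval n ((B * g) r) a b := by
    rw [Matrix.mulVec_mulVec]
    simp [Matrix.mulVec, dotProduct, qeval, vmon, mul_assoc]
  rw [h2, hαβ r a b]
  ring


theorem no_rnc_through_p_points_and_l_codim2 (n p l : ℕ) (hn : 3 ≤ n) (hp : 4 ≤ p)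
    (hl : 2 ≤ l) :
    ∃ f : MvPolynomial ((Fin l × Fin 2 × Fin (n + 1)) ⊕ (Fin p × Fin (n + 1))) ℂ, f ≠ 0 ∧
      ∀ (A : Fin l → Matrix (Fin 2) (Fin (n + 1)) ℂ) (v : Fin p → Fin (n + 1) → ℂ)
        (_ : ∀ j, LinearIndependent ℂ (fun r => A j r)) (hv : ∀ i, v i ≠ 0),
        MvPolynomial.eval
            (Sum.elim (fun q => A q.1 q.2.1 q.2.2) (fun q => v q.1 q.2)) f ≠ 0 →
        ¬ ∃ C : Set (Pn n), IsRNC n C ∧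
            (∀ i, Projectivization.mk ℂ (v i) (hv i) ∈ C) ∧
            ∀ j, MeetsIn (n - 1) (linSet (A j)) C := by
  classical
  set ι := (Fin l × Fin 2 × Fin (n + 1)) ⊕ (Fin p × Fin (n + 1)) with hι
  have hi0 : 0 < p := by omega
  have hi1 : 1 < p := by omega
  have hi2 : 2 < p := by omega
  have hi3 : 3 < p := by omega
  have hj0 : 0 < l := by omega
  have hj1 : 1 < l := by omega
  set i0 : Fin p := ⟨0, hi0⟩ with hdefi0
  set i1 : Fin p := ⟨1, hi1⟩ with hdefi1
  set i2 : Fin p := ⟨2, hi2⟩ with hdefi2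
  set i3 : Fin p := ⟨3, hi3⟩ with hdefi3
  set j0 : Fin l := ⟨0, hj0⟩ with hdefj0
  set j1 : Fin l := ⟨1, hj1⟩ with hdefj1
  set pw : Fin p → Fin l → Fin 2 → MvPolynomial ι ℂ := fun i j r =>
    ∑ s, MvPolynomial.X (Sum.inl (j, r, s)) * MvPolynomial.X (Sum.inr (i, s)) with hdefpw
  set pbr : Fin p → Fin p → Fin l → MvPolynomial ι ℂ := fun i k j =>
    pw i j 0 * pw k j 1 - pw i j 1 * pw k j 0 with hdefpbr
  refine ⟨pbr i0 i2 j0 * pbr i1 i3 j0 * pbr i0 i3 j1 * pbr i1 i2 j1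
    - pbr i0 i3 j0 * pbr i1 i2 j0 * pbr i0 i2 j1 * pbr i1 i3 j1, ?_, ?_⟩
  · -- nonzeroness
    have hj01 : j0 ≠ j1 := by
      simp [hdefj0, hdefj1, Fin.ext_iff]
    set av : Fin l → Fin 2 → Fin (n+1) := fun j r =>
      if r = 0 then ⟨0, by omega⟩ else if j = j1 then ⟨2, by omega⟩ else ⟨1, by omega⟩ with hdefav
    set vv : Fin p → Fin (n+1) → ℂ := fun i s =>
      if s = ⟨0, by omega⟩ then 1 else if s = ⟨1, by omega⟩ then ((i : ℕ) : ℂ)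
        else if s = ⟨2, by omega⟩ then ((i : ℕ) : ℂ)^2 else 0 with hdefvv
    set σ₀ : ι → ℂ := Sum.elim (fun q => if q.2.2 = av q.1 q.2.1 then 1 else 0)
      (fun q => vv q.1 q.2) with hdefσ₀
    have hgen : ∀ i j r, MvPolynomial.eval σ₀ (pw i j r) = vv i (av j r) := by
      intro i j r
      simp only [hdefpw, map_sum, map_mul, MvPolynomial.eval_X, hdefσ₀, Sum.elim_inl,
        Sum.elim_inr]
      simp [ite_mul]
    have hpw0 : ∀ i j, MvPolynomial.eval σ₀ (pw i j 0) = 1 := by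
      intro i j
      rw [hgen]
      simp [hdefav, hdefvv]
    have hpwa : ∀ i, MvPolynomial.eval σ₀ (pw i j0 1) = ((i : ℕ) : ℂ) := by
      intro i
      rw [hgen]
      have h1 : av j0 1 = ⟨1, by omega⟩ := by simp [hdefav, hj01]
      rw [h1]
      simp only [hdefvv, Fin.mk.injEq]
      norm_num
    have hpwb : ∀ i, MvPolynomial.eval σ₀ (pw i j1 1) = ((i : ℕ) : ℂ)^2 := by
      intro i
      rw [hgen]
      have h1 : av j1 1 = ⟨2, by omega⟩ := by simp [hdefav]
      rw [h1]
      simp only [hdefvv, Fin.mk.injEq]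
      norm_num
    intro hf0
    have h12 : MvPolynomial.eval σ₀ (pbr i0 i2 j0 * pbr i1 i3 j0 * pbr i0 i3 j1 * pbr i1 i2 j1
        - pbr i0 i3 j0 * pbr i1 i2 j0 * pbr i0 i2 j1 * pbr i1 i3 j1) = 12 := by
      simp only [hdefpbr, map_sub, map_mul, hpw0, hpwa, hpwb]
      norm_num [hdefi0, hdefi1, hdefi2, hdefi3]
    rw [hf0, map_zero] at h12
    norm_num at h12
  · -- main implication
    intro A v _ hv hne
    rintro ⟨C, ⟨g, hg, rfl⟩, hpts, hsec⟩
    apply hne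
    set σ : ι → ℂ := Sum.elim (fun q => A q.1 q.2.1 q.2.2) (fun q => v q.1 q.2) with hdefσ
    have hpoint : ∀ i : Fin p, ∃ a b t : ℂ, v i = t • g.mulVec (vmon n a b) :=
      fun i => point_extract n g (v i) (hv i) (hpts i)
    choose pa pb pt hpt using hpoint
    obtain ⟨m0, α0, β0, h0⟩ := secant_data n hn g (A j0) (hsec j0)
    obtain ⟨m1, α1, β1, h1⟩ := secant_data n hn g (A j1) (hsec j1)
    have hW0 : ∀ i r, (A j0).mulVec (v i) r
        = pt i * m0 (pa i) (pb i) * (α0 r * pa i + β0 r * pb i) :=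
      fun i r => h0 _ _ _ _ (hpt i) r
    have hW1 : ∀ i r, (A j1).mulVec (v i) r
        = pt i * m1 (pa i) (pb i) * (α1 r * pa i + β1 r * pb i) :=
      fun i r => h1 _ _ _ _ (hpt i) r
    have heval : ∀ i j r, MvPolynomial.eval σ (pw i j r) = (A j).mulVec (v i) r := by
      intro i j r
      simp only [hdefpw, map_sum, map_mul, MvPolynomial.eval_X, hdefσ, Sum.elim_inl,
        Sum.elim_inr]
      rw [Matrix.mulVec]
      rfl
    have hbr0 : ∀ i k, MvPolynomial.eval σ (pbr i k j0)
        = (pt i * pt k * m0 (pa i) (pb i) * m0 (pa k) (pb k))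
          * ((α0 0 * β0 1 - α0 1 * β0 0) * (pa i * pb k - pb i * pa k)) := by
      intro i k
      simp only [hdefpbr, map_sub, map_mul, heval, hW0]
      ring
    have hbr1 : ∀ i k, MvPolynomial.eval σ (pbr i k j1)
        = (pt i * pt k * m1 (pa i) (pb i) * m1 (pa k) (pb k))
          * ((α1 0 * β1 1 - α1 1 * β1 0) * (pa i * pb k - pb i * pa k)) := by
      intro i k
      simp only [hdefpbr, map_sub, map_mul, heval, hW1]
      ring
    simp only [map_sub, map_mul, hbr0, hbr1]
    ring

end
end

section
/- Let n ≥ 3, let C ⊆ ℙ^n(ℂ) be a rational normal curve passing through points P_1,…,P_{n+2} and (n-1)-secant to a codimension-two linear subspace Λ. If F is a homogeneous polynomial of degree 4 that vanishes at P_1, vanishes to order ≥ 2 at each of P_2,…,P_{n+2}, and lies in (I_Λ)^2, then F vanishes identically on C. (Indeed, pulling F back by a degree-n parametrization of C gives a binary form of degree 4n with zeros of total multiplicity at least 1 + 2(n+1) + 2(n-1) = 4n + 1.) -/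
/-!
STATEMENT 14: Let `n ≥ 3` and let `C ⊆ ℙ^n(ℂ)` be a rational normal curve through (distinct)
points `P₁,…,P_{n+2}` and `(n-1)`-secant to a codimension-two linear subspace `Λ` (with the
points off `Λ`).  If `F` is a homogeneous quartic vanishing at `P₁`, vanishing to order ≥ 2
at `P₂,…,P_{n+2}`, and lying in `(I_Λ)²`, then `F` vanishes identically on `C`.
-/
noncomputable section

open scoped BigOperators

/-- Evaluation at a vector, as a linear map on polynomials. -/
def evalLM {n : ℕ} (v : Fin (n + 1) → ℂ) : MvPolynomial (Fin (n + 1)) ℂ →ₗ[ℂ] ℂ :=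
  (MvPolynomial.aeval v : MvPolynomial (Fin (n + 1)) ℂ →ₐ[ℂ] ℂ).toLinearMap

/-- The linear form (as a polynomial) with coefficient vector `c`. -/
def linForm (n : ℕ) (c : Fin (n + 1) → ℂ) : MvPolynomial (Fin (n + 1)) ℂ :=
  ∑ j : Fin (n + 1), MvPolynomial.C (c j) * MvPolynomial.X j

/-- The square `(I_Λ)²` of the ideal of the codimension-two linear space `Λ` cut out by the
two rows of `A`, as a submodule of the polynomial ring. -/
def sqIdealOf (n : ℕ) (A : Matrix (Fin 2) (Fin (n + 1)) ℂ) :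
    Submodule ℂ (MvPolynomial (Fin (n + 1)) ℂ) :=
  Submodule.span ℂ {f | ∃ (r r' : Fin 2) (q : MvPolynomial (Fin (n + 1)) ℂ),
    f = linForm n (A r) * linForm n (A r') * q}

/-! ### Auxiliary lemmas -/

open Polynomial

namespace Aux14

lemma eval_smul_hom {σ : Type*} {d : ℕ} {F : MvPolynomial σ ℂ} (hF : F.IsHomogeneous d)
    (c : ℂ) (v : σ → ℂ) :
    MvPolynomial.eval (c • v) F = c ^ d * MvPolynomial.eval v F := by
  conv_lhs => rw [F.as_sum]
  conv_rhs => rw [F.as_sum]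
  rw [map_sum, map_sum, Finset.mul_sum]
  refine Finset.sum_congr rfl fun s hs => ?_
  rw [MvPolynomial.eval_monomial, MvPolynomial.eval_monomial]
  have hdeg : s.degree = d := by
    rw [Finsupp.degree_eq_weight_one]
    exact hF (MvPolynomial.mem_support_iff.mp hs)
  rw [Finsupp.prod, Finsupp.prod]
  have : ∀ i ∈ s.support, (c • v) i ^ s i = c ^ s i * v i ^ s i := by
    intro i _; rw [Pi.smul_apply, smul_eq_mul, mul_pow]
  rw [Finset.prod_congr rfl this, Finset.prod_mul_distrib, Finset.prod_pow_eq_pow_sum]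
  rw [show ∑ i ∈ s.support, s i = d from hdeg]
  ring

lemma isHomogeneous_pderiv {σ : Type*} [DecidableEq σ] {d : ℕ} {F : MvPolynomial σ ℂ}
    (hF : F.IsHomogeneous d) (j : σ) : (MvPolynomial.pderiv j F).IsHomogeneous (d - 1) := by
  conv_lhs => rw [F.as_sum]
  rw [map_sum]
  apply MvPolynomial.IsHomogeneous.sum
  intro s hs
  rw [MvPolynomial.pderiv_monomial]
  rcases Nat.eq_zero_or_pos (s j) with h0 | hpos
  · rw [h0]
    norm_num
    exact MvPolynomial.isHomogeneous_zero _ _ _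
  · apply MvPolynomial.isHomogeneous_monomial
    have hdeg : s.degree = d := by
      rw [Finsupp.degree_eq_weight_one]
      exact hF (MvPolynomial.mem_support_iff.mp hs)
    have hsplit : (s - Finsupp.single j 1) + Finsupp.single j 1 = s := by
      ext i
      by_cases hij : i = j
      · subst hij
        simp [Finsupp.single_apply, Nat.sub_add_cancel hpos]
      · simp [Finsupp.single_apply, Ne.symm hij, hij]
    have hs1 : (Finsupp.single j (1:ℕ)).degree = 1 := by
      exact Finsupp.degree_single j 1
    have hadd : ((s - Finsupp.single j 1) + Finsupp.single j 1).degree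
        = (s - Finsupp.single j 1).degree + (Finsupp.single j (1:ℕ)).degree := by
      simp only [Finsupp.degree_eq_weight_one]
      exact map_add _ _ _
    have := congrArg Finsupp.degree hsplit
    rw [hadd, hs1, hdeg] at this
    have h1d : 1 ≤ d := by
      rw [← hdeg]
      calc 1 ≤ s j := hpos
      _ ≤ s.degree := Finsupp.le_degree j s
    omega

lemma derivative_aeval {σ : Type*} [Fintype σ] [DecidableEq σ]
    (w : σ → Polynomial ℂ) (F : MvPolynomial σ ℂ) :
    derivative (MvPolynomial.aeval w F) =
      ∑ j : σ, MvPolynomial.aeval w (MvPolynomial.pderiv j F) * derivative (w j) := by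
  induction F using MvPolynomial.induction_on with
  | C a => simp
  | add p q hp hq =>
      simp only [map_add, derivative_add, hp, hq, add_mul, Finset.sum_add_distrib]
  | mul_X p i hp =>
      calc derivative (MvPolynomial.aeval w (p * MvPolynomial.X i))
          = derivative (MvPolynomial.aeval w p * w i) := by
            rw [map_mul, MvPolynomial.aeval_X]
        _ = derivative (MvPolynomial.aeval w p) * w i
            + MvPolynomial.aeval w p * derivative (w i) := derivative_mul
        _ = (∑ j : σ, MvPolynomial.aeval w (MvPolynomial.pderiv j p) * derivative (w j)) * w i
            + MvPolynomial.aeval w p * derivative (w i) := by rw [hp]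
        _ = ∑ j : σ, MvPolynomial.aeval w (MvPolynomial.pderiv j (p * MvPolynomial.X i))
              * derivative (w j) := ?_
      have hsplit : ∀ j : σ,
          MvPolynomial.aeval w (MvPolynomial.pderiv j (p * MvPolynomial.X i)) * derivative (w j)
          = MvPolynomial.aeval w (MvPolynomial.pderiv j p) * derivative (w j) * w i
            + MvPolynomial.aeval w p
              * MvPolynomial.aeval w (MvPolynomial.pderiv j (MvPolynomial.X i : MvPolynomial σ ℂ))
              * derivative (w j) := by
        intro j
        rw [MvPolynomial.pderiv_mul, map_add, map_mul, map_mul, MvPolynomial.aeval_X]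
        ring
      rw [Finset.sum_congr rfl (fun j _ => hsplit j), Finset.sum_add_distrib]
      congr 1
      · rw [Finset.sum_mul]
      · rw [Finset.sum_eq_single i]
        · rw [MvPolynomial.pderiv_X_self]; simp
        · intro j _ hj
          rw [MvPolynomial.pderiv_X_of_ne (Ne.symm hj)]
          simp
        · simp

lemma eval_aeval {σ : Type*} (w : σ → Polynomial ℂ) (F : MvPolynomial σ ℂ) (t : ℂ) :
    (MvPolynomial.aeval w F).eval t = MvPolynomial.eval (fun i => (w i).eval t) F := by
  induction F using MvPolynomial.induction_on with
  | C a => simp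
  | add p q hp hq => simp [hp, hq]
  | mul_X p i hp => simp [hp]

lemma sq_dvd_of_double_root {p : Polynomial ℂ} {t : ℂ}
    (h0 : p.eval t = 0) (h1 : p.derivative.eval t = 0) : (X - C t) ^ 2 ∣ p := by
  obtain ⟨u, hu⟩ := (dvd_iff_isRoot.mpr h0)
  have hderiv : p.derivative = u + (X - C t) * u.derivative := by
    rw [hu, derivative_mul]
    simp
  have hut : u.eval t = 0 := by
    have := congrArg (fun q => Polynomial.eval t q) hderiv
    simp only [eval_add, eval_mul, eval_sub, eval_X, eval_C, sub_self, zero_mul, add_zero] at this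
    rw [← this, h1]
  obtain ⟨v, hv⟩ := (dvd_iff_isRoot.mpr hut)
  exact ⟨v, by rw [hu, hv]; ring⟩

lemma dvd_of_mem_span {p d : Polynomial ℂ} {S : Set (Polynomial ℂ)}
    (hp : p ∈ Submodule.span ℂ S) (hS : ∀ f ∈ S, d ∣ f) : d ∣ p := by
  have hle : Submodule.span ℂ S ≤ (Ideal.span {d}).restrictScalars ℂ := by
    rw [Submodule.span_le]
    intro f hf
    simpa [Ideal.mem_span_singleton] using hS f hf
  simpa [Ideal.mem_span_singleton] using hle hp

lemma sum_rootMultiplicity_le {p : Polynomial ℂ} (hp : p ≠ 0) (D : Finset ℂ) :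
    ∑ t ∈ D, p.rootMultiplicity t ≤ p.natDegree := by
  classical
  have hle : (∑ t ∈ D, (p.roots.count t) • ({t} : Multiset ℂ)) ≤ p.roots := by
    rw [Multiset.le_iff_count]
    intro x
    rw [Multiset.count_sum']
    rcases Finset.decidableMem x D with hx | hx
    · rw [Finset.sum_eq_zero]
      · exact Nat.zero_le _
      · intro t ht
        rw [Multiset.count_nsmul, Multiset.count_singleton]
        have : x ≠ t := fun h => hx (h ▸ ht)
        simp [this]
    · rw [Finset.sum_eq_single x]
      · simp
      · intro t ht htx
        rw [Multiset.count_nsmul, Multiset.count_singleton]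
        simp [Ne.symm htx]
      · intro h; exact absurd hx h
  have hcard := Multiset.card_le_card hle
  rw [Multiset.card_sum D] at hcard
  simp only [Multiset.card_nsmul, Multiset.card_singleton, mul_one] at hcard
  calc ∑ t ∈ D, p.rootMultiplicity t = ∑ t ∈ D, p.roots.count t := by
        refine Finset.sum_congr rfl fun t _ => ?_
        rw [Polynomial.count_roots]
    _ ≤ Multiset.card p.roots := hcard
    _ ≤ p.natDegree := Polynomial.card_roots' p

lemma natDegree_aeval_le {σ : Type*} {d m : ℕ} {F : MvPolynomial σ ℂ}
    (hF : F.IsHomogeneous d) (w : σ → Polynomial ℂ) (hw : ∀ i, (w i).natDegree ≤ m) :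
    (MvPolynomial.aeval w F).natDegree ≤ d * m := by
  conv_lhs => rw [F.as_sum]
  rw [map_sum]
  apply Polynomial.natDegree_sum_le_of_forall_le
  intro s hs
  rw [MvPolynomial.aeval_monomial]
  have hdeg : s.degree = d := by
    rw [Finsupp.degree_eq_weight_one]
    exact hF (MvPolynomial.mem_support_iff.mp hs)
  calc (algebraMap ℂ (Polynomial ℂ) (MvPolynomial.coeff s F)
        * s.prod fun i k => w i ^ k).natDegree
      ≤ (algebraMap ℂ (Polynomial ℂ) (MvPolynomial.coeff s F)).natDegree
        + (s.prod fun i k => w i ^ k).natDegree := Polynomial.natDegree_mul_le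
    _ ≤ 0 + (s.prod fun i k => w i ^ k).natDegree := by
        simp [Polynomial.natDegree_C]
    _ = (∏ i ∈ s.support, w i ^ s i).natDegree := by rw [Finsupp.prod, zero_add]
    _ ≤ ∑ i ∈ s.support, (w i ^ s i).natDegree := Polynomial.natDegree_prod_le _ _
    _ ≤ ∑ i ∈ s.support, s i * m := by
        apply Finset.sum_le_sum
        intro i _
        calc (w i ^ s i).natDegree ≤ s i * (w i).natDegree := Polynomial.natDegree_pow_le
          _ ≤ s i * m := Nat.mul_le_mul_left _ (hw i)
    _ = (∑ i ∈ s.support, s i) * m := by rw [Finset.sum_mul]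
    _ = d * m := by rw [show ∑ i ∈ s.support, s i = d from hdeg]

end Aux14

theorem quartic_vanishes_on_rnc (n : ℕ) (hn : 3 ≤ n)
    (g : Matrix (Fin (n + 1)) (Fin (n + 1)) ℂ) (hg : IsUnit g)
    (C : Set (Pn n)) (hC : C = rncOf n g)
    (P : Fin (n + 2) → Pn n) (hPinj : Function.Injective P) (hPC : ∀ i, P i ∈ C)
    (A : Matrix (Fin 2) (Fin (n + 1)) ℂ) (hA : LinearIndependent ℂ (fun r => A r))
    (hsec : MeetsIn (n - 1) (linSet A) C) (hPΛ : ∀ i, P i ∉ linSet A)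
    (F : MvPolynomial (Fin (n + 1)) ℂ)
    (hF4 : F ∈ MvPolynomial.homogeneousSubmodule (Fin (n + 1)) ℂ 4)
    (hFP0 : MvPolynomial.eval (P 0).rep F = 0)
    (hFdouble : ∀ i : Fin (n + 2), i ≠ 0 →
      MvPolynomial.eval (P i).rep F = 0 ∧
      ∀ j : Fin (n + 1), MvPolynomial.eval (P i).rep (MvPolynomial.pderiv j F) = 0)
    (hFΛ : F ∈ sqIdealOf n A) :
    ∀ x ∈ C, MvPolynomial.eval x.rep F = 0 := by
  classical
  have hF : F.IsHomogeneous 4 := by rwa [MvPolynomial.mem_homogeneousSubmodule] at hF4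
  have hn0 : 0 < n := by omega
  set Γ : ℂ → ℂ → (Fin (n+1) → ℂ) := fun a b => g.mulVec (vmon n a b) with hΓ
  -- scaling of the affine cone of the parametrization
  have hvmon : ∀ c a b : ℂ, vmon n (c*a) (c*b) = c^n • vmon n a b := by
    intro c a b; funext i
    simp only [vmon, Pi.smul_apply, smul_eq_mul, mul_pow]
    have hi : (i:ℕ) ≤ n := Nat.lt_succ_iff.mp i.isLt
    have : c ^ (n - (i:ℕ)) * c ^ (i:ℕ) = c ^ n := by
      rw [← pow_add, Nat.sub_add_cancel hi]
    calc c ^ (n - (i:ℕ)) * a ^ (n - (i:ℕ)) * (c ^ (i:ℕ) * b ^ (i:ℕ))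
        = (c ^ (n - (i:ℕ)) * c ^ (i:ℕ)) * (a ^ (n - (i:ℕ)) * b ^ (i:ℕ)) := by ring
      _ = c ^ n * (a ^ (n - (i:ℕ)) * b ^ (i:ℕ)) := by rw [this]
  have hΓs : ∀ c a b : ℂ, Γ (c*a) (c*b) = c^n • Γ a b := by
    intro c a b
    simp only [hΓ]
    rw [hvmon, Matrix.mulVec_smul]
  -- scaling of the pulled-back quartic
  have hΦs : ∀ c a b : ℂ, MvPolynomial.eval (Γ (c*a) (c*b)) F
      = c^(4*n) * MvPolynomial.eval (Γ a b) F := by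
    intro c a b
    rw [hΓs, Aux14.eval_smul_hom hF, ← pow_mul, mul_comm n 4]
  -- parameters for a point of `C`, on the nose
  have hparam : ∀ x ∈ C, ∃ a b : ℂ, (a ≠ 0 ∨ b ≠ 0) ∧ Γ a b = x.rep := by
    intro x hx
    rw [hC] at hx
    obtain ⟨a₀, b₀, hab₀, hne, hxeq⟩ := hx
    obtain ⟨u, hu⟩ := Projectivization.exists_smul_eq_mk_rep ℂ _ hne
    obtain ⟨lam, hlam⟩ := IsAlgClosed.exists_pow_nat_eq (u : ℂ) hn0
    have hu0 : (u : ℂ) ≠ 0 := u.ne_zero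
    have hlam0 : lam ≠ 0 := by
      intro h; rw [h, zero_pow hn0.ne'] at hlam; exact hu0 hlam.symm
    refine ⟨lam * a₀, lam * b₀, ?_, ?_⟩
    · rcases hab₀ with h | h
      · exact Or.inl (mul_ne_zero hlam0 h)
      · exact Or.inr (mul_ne_zero hlam0 h)
    · rw [hΓs, hlam, hxeq]
      simpa [Units.smul_def] using hu
  -- proportional parameters give the same point
  have hsame : ∀ (x y : Pn n) (a b a' b' : ℂ), Γ a b = x.rep → Γ a' b' = y.rep →
      (a ≠ 0 ∨ b ≠ 0) → (a' ≠ 0 ∨ b' ≠ 0) → a * b' = a' * b → x = y := by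
    intro x y a b a' b' hx hy hab hab' hprop
    have key : ∀ lam : ℂ, lam * a = a' → lam * b = b' → x = y := by
      intro lam h1 h2
      have heq : Γ a' b' = lam^n • Γ a b := by rw [← h1, ← h2, hΓs]
      have h3 : y.rep = lam^n • x.rep := by rw [← hy, heq, hx]
      have h4 : Projectivization.mk ℂ y.rep y.rep_nonzero
          = Projectivization.mk ℂ x.rep x.rep_nonzero :=
        (Projectivization.mk_eq_mk_iff' ℂ _ _ _ _).mpr ⟨lam^n, h3.symm⟩
      rw [Projectivization.mk_rep, Projectivization.mk_rep] at h4
      exact h4.symm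
    by_cases hb : b = 0
    · have ha : a ≠ 0 := by rcases hab with h | h; exact h; exact absurd hb h
      have hb' : b' = 0 := by
        have : a * b' = 0 := by rw [hprop, hb, mul_zero]
        rcases mul_eq_zero.mp this with h | h
        · exact absurd h ha
        · exact h
      exact key (a'/a) (by field_simp) (by rw [hb, hb', mul_zero])
    · have hb'0 : b' ≠ 0 := by
        intro h
        rw [h, mul_zero] at hprop
        rcases mul_eq_zero.mp hprop.symm with h2 | h2
        · rcases hab' with h3 | h3
          · exact h3 h2
          · exact h3 h
        · exact hb h2
      refine key (b'/b) ?_ (by field_simp)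
      field_simp
      linear_combination hprop
  -- the two affine charts of the parametrization, as polynomials
  set wP : Fin (n+1) → Polynomial ℂ :=
    fun i => ∑ j : Fin (n+1), Polynomial.C (g i j) * Polynomial.X ^ (n - (j:ℕ)) with hwP
  set uP : Fin (n+1) → Polynomial ℂ :=
    fun i => ∑ j : Fin (n+1), Polynomial.C (g i j) * Polynomial.X ^ (j:ℕ) with huP
  have hwev : ∀ t : ℂ, (fun i => (wP i).eval t) = Γ t 1 := by
    intro t; funext i
    simp [hwP, hΓ, Matrix.mulVec, dotProduct, vmon, Polynomial.eval_finset_sum]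
  have huev : ∀ s : ℂ, (fun i => (uP i).eval s) = Γ 1 s := by
    intro s; funext i
    simp [huP, hΓ, Matrix.mulVec, dotProduct, vmon, Polynomial.eval_finset_sum]
  set q : Polynomial ℂ := MvPolynomial.aeval wP F with hq
  set r : Polynomial ℂ := MvPolynomial.aeval uP F with hr
  have hqe : ∀ t : ℂ, q.eval t = MvPolynomial.eval (Γ t 1) F := by
    intro t; rw [hq, Aux14.eval_aeval, hwev]
  have hre : ∀ s : ℂ, r.eval s = MvPolynomial.eval (Γ 1 s) F := by
    intro s; rw [hr, Aux14.eval_aeval, huev]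
  have hqd : q.natDegree ≤ 4*n := by
    apply Aux14.natDegree_aeval_le hF
    intro i
    apply Polynomial.natDegree_sum_le_of_forall_le
    intro j _
    exact le_trans (Polynomial.natDegree_C_mul_le _ _)
      (le_trans (Polynomial.natDegree_X_pow_le _) (Nat.sub_le _ _))
  -- the reversed-coefficients relation between the two charts
  have hqr : r = ∑ k ∈ Finset.range (4*n+1), Polynomial.C (q.coeff k)
      * Polynomial.X ^ (4*n - k) := by
    have hroot : ∀ s : ℂ, s ≠ 0 → r.eval s
        = (∑ k ∈ Finset.range (4*n+1), Polynomial.C (q.coeff k)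
          * Polynomial.X ^ (4*n - k)).eval s := by
      intro s hs
      rw [Polynomial.eval_finset_sum]
      simp only [Polynomial.eval_mul, Polynomial.eval_C, Polynomial.eval_pow, Polynomial.eval_X]
      have h1 : r.eval s = s^(4*n) * q.eval s⁻¹ := by
        rw [hre, hqe]
        have h2 := hΦs s s⁻¹ 1
        rw [mul_inv_cancel₀ hs, mul_one] at h2
        exact h2
      rw [h1, Polynomial.eval_eq_sum_range' (Nat.lt_succ_of_le hqd), Finset.mul_sum]
      refine Finset.sum_congr rfl fun k hk => ?_
      rw [Finset.mem_range] at hk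
      have hk' : k ≤ 4*n := by omega
      rw [pow_sub₀ s hs hk', inv_pow]
      ring
    have hzero : (r - ∑ k ∈ Finset.range (4*n+1), Polynomial.C (q.coeff k)
        * Polynomial.X ^ (4*n - k)) = 0 := by
      apply Polynomial.eq_zero_of_infinite_isRoot
      apply Set.Infinite.mono (s := {x : ℂ | x ≠ 0})
      · intro x hx
        simp only [Set.mem_setOf_eq, Polynomial.IsRoot, Polynomial.eval_sub]
        rw [hroot x hx, sub_self]
      · have : ({x : ℂ | x ≠ 0}) = ({0} : Set ℂ)ᶜ := by ext x; simp
        rw [this]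
        exact (Set.finite_singleton 0).infinite_compl
    exact sub_eq_zero.mp hzero
  have hcoeff : ∀ k ≤ 4*n, q.coeff k = r.coeff (4*n - k) := by
    intro k hk
    rw [hqr, Polynomial.finset_sum_coeff]
    simp only [Polynomial.coeff_C_mul, Polynomial.coeff_X_pow]
    rw [Finset.sum_eq_single k]
    · simp
    · intro j hj hjk
      rw [Finset.mem_range] at hj
      have h6 : ¬(4*n - k = 4*n - j) := by omega
      simp [h6]
    · intro h
      exact absurd (Finset.mem_range.mpr (by omega)) h
  -- the marked points
  obtain ⟨hTfin, hTcard⟩ := hsec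
  set T : Finset (Pn n) := hTfin.toFinset with hT
  have hTmem : ∀ y, y ∈ T ↔ y ∈ linSet A ∩ C := fun y => Set.Finite.mem_toFinset _
  have hTcard' : T.card = n - 1 := by
    rw [hT, ← Set.ncard_eq_toFinset_card _ hTfin, hTcard]
  set EP : Finset (Pn n) := Finset.image P Finset.univ with hEP
  set E : Finset (Pn n) := EP ∪ T with hE
  have hdisj : Disjoint EP T := by
    rw [Finset.disjoint_left]
    intro y hy hyT
    obtain ⟨i, -, rfl⟩ := Finset.mem_image.mp hy
    exact hPΛ i ((hTmem _).mp hyT).1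
  have hEC : ∀ y ∈ E, y ∈ C := by
    intro y hy
    rcases Finset.mem_union.mp hy with h | h
    · obtain ⟨i, -, rfl⟩ := Finset.mem_image.mp h
      exact hPC i
    · exact ((hTmem _).mp h).2
  set μ : Pn n → ℕ := fun y => if y = P 0 then 1 else 2 with hμ
  have hμle : ∀ y, μ y ≤ 2 := by
    intro y; by_cases h : y = P 0 <;> simp [hμ, h]
  have hEμ : ∑ y ∈ E, μ y = 4*n+1 := by
    rw [hE, Finset.sum_union hdisj]
    have h1 : ∑ y ∈ EP, μ y = 2*(n+2) - 1 := by
      rw [hEP, Finset.sum_image (fun x _ y _ h => hPinj h)]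
      have h2 : ∀ i : Fin (n+2), μ (P i) = if i = 0 then 1 else 2 := by
        intro i
        simp only [hμ, hPinj.eq_iff]
      rw [Finset.sum_congr rfl (fun i _ => h2 i)]
      rw [← Finset.add_sum_erase _ _ (Finset.mem_univ (0 : Fin (n+2)))]
      rw [if_pos rfl]
      rw [Finset.sum_congr rfl (fun i hi => if_neg (Finset.ne_of_mem_erase hi))]
      rw [Finset.sum_const, Finset.card_erase_of_mem (Finset.mem_univ _), Finset.card_univ,
        Fintype.card_fin]
      simp only [smul_eq_mul]
      omega
    have h3 : ∑ y ∈ T, μ y = 2*(n-1) := by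
      have h4 : ∀ y ∈ T, μ y = 2 := by
        intro y hy
        apply if_neg
        intro h
        exact hPΛ 0 (h ▸ ((hTmem y).mp hy).1)
      rw [Finset.sum_congr rfl h4, Finset.sum_const, hTcard']
      simp [mul_comm]
    rw [h1, h3]
    omega
  -- choose parameters for each marked point
  have hex : ∀ y : Pn n, y ∈ E → ∃ a b : ℂ, (a ≠ 0 ∨ b ≠ 0) ∧ Γ a b = y.rep :=
    fun y hy => hparam y (hEC y hy)
  choose! pa pb hab1 hab2 using hex
  -- the key divisibility claim, uniform in the chart
  have keyclaim : ∀ (vv : Fin (n+1) → Polynomial ℂ) (t c : ℂ) (y : Pn n), y ∈ E → c ≠ 0 →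
      (fun i => (vv i).eval t) = c • y.rep →
      (Polynomial.X - Polynomial.C t)^(μ y) ∣ MvPolynomial.aeval vv F := by
    intro vv t c y hy hc hsc
    have hev : ∀ G : MvPolynomial (Fin (n+1)) ℂ,
        (MvPolynomial.aeval vv G).eval t = MvPolynomial.eval (c • y.rep) G := by
      intro G; rw [Aux14.eval_aeval, hsc]
    have hev4 : (MvPolynomial.aeval vv F).eval t = c^4 * MvPolynomial.eval y.rep F := by
      rw [hev, Aux14.eval_smul_hom hF]
    have hdevt : (∀ j, MvPolynomial.eval y.rep (MvPolynomial.pderiv j F) = 0) →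
        (MvPolynomial.aeval vv F).derivative.eval t = 0 := by
      intro hd
      rw [Aux14.derivative_aeval, Polynomial.eval_finset_sum]
      apply Finset.sum_eq_zero
      intro j _
      rw [Polynomial.eval_mul, hev, Aux14.eval_smul_hom (Aux14.isHomogeneous_pderiv hF j),
        hd j, mul_zero, zero_mul]
    rcases Finset.mem_union.mp hy with hyP | hyT
    · obtain ⟨i, -, rfl⟩ := Finset.mem_image.mp hyP
      by_cases hi : i = 0
      · subst hi
        rw [show μ (P 0) = 1 from if_pos rfl, pow_one]
        exact Polynomial.dvd_iff_isRoot.mpr (by rw [Polynomial.IsRoot, hev4, hFP0, mul_zero])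
      · rw [show μ (P i) = 2 from if_neg (by rw [hPinj.eq_iff]; exact hi)]
        obtain ⟨he, hd⟩ := hFdouble i hi
        exact Aux14.sq_dvd_of_double_root (by rw [hev4, he, mul_zero]) (hdevt hd)
    · have hyΛ : A.mulVec y.rep = 0 := ((hTmem y).mp hyT).1
      have hμ2 : μ y = 2 := if_neg (fun h => hPΛ 0 (by rw [← h]; exact hyΛ))
      have hL : ∀ rr : Fin 2, (MvPolynomial.aeval vv (linForm n (A rr))).eval t = 0 := by
        intro rr
        rw [hev]
        have h0 := congrFun hyΛ rr
        simp only [Matrix.mulVec, dotProduct, Pi.zero_apply] at h0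
        simp only [linForm, map_sum, map_mul, MvPolynomial.eval_C, MvPolynomial.eval_X,
          Pi.smul_apply, smul_eq_mul]
        calc ∑ j, A rr j * (c * y.rep j) = c * ∑ j, A rr j * y.rep j := by
              rw [Finset.mul_sum]
              exact Finset.sum_congr rfl fun j _ => by ring
          _ = 0 := by rw [h0, mul_zero]
      rw [hμ2]
      have hgens : ∀ f ∈ ((MvPolynomial.aeval vv).toLinearMap ''
          {f : MvPolynomial (Fin (n+1)) ℂ | ∃ (rr rr' : Fin 2) (Q : MvPolynomial (Fin (n+1)) ℂ),
            f = linForm n (A rr) * linForm n (A rr') * Q}),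
          (Polynomial.X - Polynomial.C t)^2 ∣ f := by
        rintro f ⟨f₀, ⟨rr, rr', Q, rfl⟩, rfl⟩
        simp only [AlgHom.toLinearMap_apply, map_mul]
        rw [sq, mul_assoc]
        exact mul_dvd_mul (Polynomial.dvd_iff_isRoot.mpr (hL rr))
          (dvd_mul_of_dvd_left (Polynomial.dvd_iff_isRoot.mpr (hL rr')) _)
      exact Aux14.dvd_of_mem_span
        (Submodule.apply_mem_span_image_of_mem_span (MvPolynomial.aeval vv).toLinearMap hFΛ) hgens
  -- main counting argument: q = 0
  have hq0 : q = 0 := by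
    by_contra hq0
    set Einf : Finset (Pn n) := E.filter (fun y => pb y = 0) with hEinf
    have hEinfsub : Einf ⊆ E := Finset.filter_subset _ _
    have hcardinf : Einf.card ≤ 1 := by
      rw [Finset.card_le_one]
      intro y hy y' hy'
      rw [Finset.mem_filter] at hy hy'
      exact hsame y y' _ _ _ _ (hab2 _ hy.1) (hab2 _ hy'.1) (hab1 _ hy.1) (hab1 _ hy'.1)
        (by rw [hy.2, hy'.2]; ring)
    set minf := ∑ y ∈ Einf, μ y with hminf
    have hminfle : minf ≤ 2 := by
      calc minf ≤ ∑ _y ∈ Einf, 2 := Finset.sum_le_sum (fun y _ => hμle y)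
        _ = 2 * Einf.card := by rw [Finset.sum_const, smul_eq_mul, mul_comm]
        _ ≤ 2 := by omega
    have hcoeffzero : ∀ k, 4*n - minf < k → q.coeff k = 0 := by
      intro k hk
      by_cases hk4 : 4*n < k
      · exact Polynomial.coeff_eq_zero_of_natDegree_lt (lt_of_le_of_lt hqd hk4)
      · push_neg at hk4
        have hminfpos : 0 < minf := by omega
        have hne : Einf.Nonempty := by
          by_contra h
          rw [Finset.not_nonempty_iff_eq_empty] at h
          rw [hminf, h, Finset.sum_empty] at hminfpos
          exact absurd hminfpos (lt_irrefl 0)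
        obtain ⟨yinf, hyinf⟩ := hne
        have hEeq : Einf = {yinf} := by
          apply Finset.eq_singleton_iff_unique_mem.mpr
          refine ⟨hyinf, fun x hx => ?_⟩
          exact Finset.card_le_one.mp hcardinf x hx yinf hyinf
        have hminfeq : minf = μ yinf := by rw [hminf, hEeq, Finset.sum_singleton]
        rw [Finset.mem_filter] at hyinf
        have hb0 : pb yinf = 0 := hyinf.2
        have ha0 : pa yinf ≠ 0 := by
          rcases hab1 _ hyinf.1 with h | h
          · exact h
          · exact absurd hb0 h
        have hscaleinf : (fun i => (uP i).eval 0) = ((pa yinf)⁻¹)^n • yinf.rep := by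
          rw [huev]
          have h5 := hΓs (pa yinf)⁻¹ (pa yinf) (pb yinf)
          rw [inv_mul_cancel₀ ha0, hab2 _ hyinf.1, hb0, mul_zero] at h5
          exact h5
        have hdvd := keyclaim uP 0 (((pa yinf)⁻¹)^n) yinf hyinf.1
          (pow_ne_zero _ (inv_ne_zero ha0)) hscaleinf
        rw [map_zero, sub_zero] at hdvd
        have hrc : ∀ d < μ yinf, r.coeff d = 0 := Polynomial.X_pow_dvd_iff.mp hdvd
        rw [hcoeff k hk4]
        exact hrc _ (by omega)
    have hqdeg' : q.natDegree ≤ 4*n - minf :=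
      Polynomial.natDegree_le_iff_coeff_eq_zero.mpr hcoeffzero
    set D : Finset ℂ := (E \ Einf).image (fun y => (pb y)⁻¹ * pa y) with hD
    have hbne : ∀ y ∈ E \ Einf, pb y ≠ 0 := by
      intro y hy
      rcases Finset.mem_sdiff.mp hy with ⟨hyE, hyn⟩
      intro h
      exact hyn (Finset.mem_filter.mpr ⟨hyE, h⟩)
    have hinj : ∀ y ∈ E \ Einf, ∀ y' ∈ E \ Einf,
        (pb y)⁻¹ * pa y = (pb y')⁻¹ * pa y' → y = y' := by
      intro y hy y' hy' heq
      have hbY := hbne y hy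
      have hbY' := hbne y' hy'
      have hyE := (Finset.mem_sdiff.mp hy).1
      have hyE' := (Finset.mem_sdiff.mp hy').1
      apply hsame y y' _ _ _ _ (hab2 _ hyE) (hab2 _ hyE') (hab1 _ hyE) (hab1 _ hyE')
      field_simp at heq
      linear_combination heq
    have hsum1 : ∑ y ∈ E \ Einf, μ y ≤ ∑ td ∈ D, q.rootMultiplicity td := by
      rw [hD, Finset.sum_image hinj]
      apply Finset.sum_le_sum
      intro y hy
      have hyE := (Finset.mem_sdiff.mp hy).1
      have hbY := hbne y hy
      have hscaleY : (fun i => (wP i).eval ((pb y)⁻¹ * pa y)) = ((pb y)⁻¹)^n • y.rep := by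
        rw [hwev]
        have h5 := hΓs (pb y)⁻¹ (pa y) (pb y)
        rw [inv_mul_cancel₀ hbY, hab2 _ hyE] at h5
        exact h5
      have hdvd := keyclaim wP ((pb y)⁻¹ * pa y) (((pb y)⁻¹)^n) y hyE
        (pow_ne_zero _ (inv_ne_zero hbY)) hscaleY
      exact (Polynomial.le_rootMultiplicity_iff hq0).mpr hdvd
    have hsum2 := Aux14.sum_rootMultiplicity_le hq0 D
    have hsum3 := Finset.sum_sdiff (f := μ) hEinfsub
    rw [hEμ] at hsum3
    omega
  -- conclusion
  have hr0 : r = 0 := by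
    rw [hqr, hq0]
    simp
  intro x hx
  obtain ⟨a, b, hab, hrep⟩ := hparam x hx
  rw [← hrep]
  by_cases hb : b = 0
  · have ha : a ≠ 0 := by
      rcases hab with h | h
      · exact h
      · exact absurd hb h
    have h5 := hΦs a 1 0
    rw [mul_one, mul_zero] at h5
    rw [hb, h5, ← hre 0, hr0]
    simp
  · have h5 := hΦs b (b⁻¹ * a) 1
    rw [mul_one] at h5
    rw [show b * (b⁻¹ * a) = a from by field_simp] at h5
    rw [h5, ← hqe, hq0]
    simp

end
end

section
/- Let A = (P_1,P_2,P_3,Λ_1,Λ_2,Λ_3) and B = (Q_1,Q_2,Q_3,M_1,M_2,M_3) be two ordered generic sets in ℙ^3(ℂ), each consisting of three points and three lines, and let C_A and C_B be the unique twisted cubics through the respective points and 2-secant to the respective lines. Let A' ⊂ C_A ≅ ℙ^1 be the ordered set of nine points consisting of P_1,P_2,P_3 and the two intersection points of C_A with each Λ_i, and define B' ⊂ C_B ≅ ℙ^1 analogously. Then A and B are projectively equivalent (there is an automorphism of ℙ^3 carrying P_i to Q_i and Λ_i to M_i for each i) if and only if A' and B' are projectively equivalent as ordered subsets of ℙ^1.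 -/
/-!
STATEMENT 19: Let `A = (P₁,P₂,P₃,Λ₁,Λ₂,Λ₃)` and `B = (Q₁,Q₂,Q₃,M₁,M₂,M₃)` be two ordered
configurations in `ℙ^3(ℂ)`, each of three points and three lines, generic in the sense that
there is a unique twisted cubic `C_A` through the `Pᵢ` and 2-secant to the `Λᵢ` (here
`C_A = rncOf 3 g_A`), and similarly `C_B = rncOf 3 g_B` for `B`.  Let `A'` be the ordered set
of nine points of `C_A ≅ ℙ^1`: the `Pᵢ` and the two intersection points of `C_A` with each
`Λᵢ`; similarly `B'`.  Then `A` and `B` are projectively equivalent (some automorphism of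
`ℙ^3` carries `Pᵢ ↦ Qᵢ` and `Λᵢ ↦ Mᵢ`) if and only if `A'` and `B'` are projectively
equivalent as ordered subsets of `ℙ^1`, i.e. some automorphism `m ∈ PGL₂` of the common
parameter `ℙ^1` of the two curves carries, through the two parametrizations, `Pᵢ` to `Qᵢ`
and the pair `C_A ∩ Λᵢ` to the pair `C_B ∩ Mᵢ`.
-/
noncomputable section

open scoped BigOperators

section Aux
open Matrix Polynomial


/-- symmetric cube of a 2×2 matrix -/
def sym3 (m : Matrix (Fin 2) (Fin 2) ℂ) : Matrix (Fin 4) (Fin 4) ℂ :=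
  let a := m 0 0; let b := m 0 1; let c := m 1 0; let d := m 1 1
  !![a^3, 3*a^2*b, 3*a*b^2, b^3;
     a^2*c, a^2*d + 2*a*b*c, b^2*c + 2*a*b*d, b^2*d;
     a*c^2, b*c^2 + 2*a*c*d, a*d^2 + 2*b*c*d, b*d^2;
     c^3, 3*c^2*d, 3*c*d^2, d^3]

lemma sym3_vmon (m : Matrix (Fin 2) (Fin 2) ℂ) (a b : ℂ) :
    (sym3 m).mulVec (vmon 3 a b) =
      vmon 3 (m 0 0 * a + m 0 1 * b) (m 1 0 * a + m 1 1 * b) := by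
  funext j
  fin_cases j <;>
    simp [sym3, vmon, Matrix.mulVec, dotProduct, Fin.sum_univ_four,
      show ((3:Fin 4):ℕ) = 3 from rfl] <;> ring

lemma sym3_mul (m n : Matrix (Fin 2) (Fin 2) ℂ) :
    sym3 m * sym3 n = sym3 (m * n) := by
  ext i j
  fin_cases i <;> fin_cases j <;>
    simp [sym3, Matrix.mul_apply, Fin.sum_univ_four, Fin.sum_univ_two] <;> ring

lemma sym3_one : sym3 1 = 1 := by
  ext i j
  fin_cases i <;> fin_cases j <;> simp [sym3, Matrix.one_apply, Matrix.vecHead, Matrix.vecTail]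

lemma sym3_isUnit {m : Matrix (Fin 2) (Fin 2) ℂ} (hm : IsUnit m) : IsUnit (sym3 m) := by
  rcases hm with ⟨u, rfl⟩
  refine isUnit_iff_exists.2 ⟨sym3 ↑u⁻¹, ?_, ?_⟩ <;> rw [sym3_mul]
  · rw [Units.mul_inv, sym3_one]
  · rw [Units.inv_mul, sym3_one]


lemma vmon_ne_zero {a b : ℂ} (h : a ≠ 0 ∨ b ≠ 0) : vmon 3 a b ≠ 0 := by
  intro hz
  rcases h with h | h
  · have h0 := congrFun hz 0
    simp [vmon] at h0
    exact h h0
  · have h3 := congrFun hz 3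
    simp [vmon, show ((3:Fin 4):ℕ) = 3 from rfl] at h3
    exact h h3

lemma mulVec_ne_zero {g : Matrix (Fin 4) (Fin 4) ℂ} (hg : IsUnit g) {v : Fin 4 → ℂ}
    (hv : v ≠ 0) : g.mulVec v ≠ 0 := by
  intro h
  apply hv
  rcases isUnit_iff_exists.1 hg with ⟨g', h1, h2⟩
  have : g'.mulVec (g.mulVec v) = v := by
    rw [Matrix.mulVec_mulVec, h2, Matrix.one_mulVec]
  rw [h, Matrix.mulVec_zero] at this
  exact this.symm

def kerOf (A : Matrix (Fin 2) (Fin 4) ℂ) : Submodule ℂ (Fin 4 → ℂ) :=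
  LinearMap.ker A.mulVecLin

lemma mem_linSet_iff_rep (A : Matrix (Fin 2) (Fin 4) ℂ) (x : Pn 3) :
    x ∈ linSet A ↔ x.rep ∈ kerOf A := by
  simp [linSet, kerOf, LinearMap.mem_ker, Matrix.mulVecLin_apply, Set.mem_setOf_eq]

lemma rep_mk_mem_iff (K : Submodule ℂ (Fin 4 → ℂ)) {v : Fin 4 → ℂ} (hv : v ≠ 0) :
    (Projectivization.mk ℂ v hv).rep ∈ K ↔ v ∈ K := by
  obtain ⟨c, hc⟩ := Projectivization.exists_smul_eq_mk_rep ℂ v hv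
  rw [← hc, Units.smul_def, Submodule.smul_mem_iff _ (Units.ne_zero c)]

lemma mk_mem_linSet_iff (A : Matrix (Fin 2) (Fin 4) ℂ) {v : Fin 4 → ℂ} (hv : v ≠ 0) :
    Projectivization.mk ℂ v hv ∈ linSet A ↔ v ∈ kerOf A := by
  rw [mem_linSet_iff_rep, rep_mk_mem_iff]

lemma finrank_kerOf (A : Matrix (Fin 2) (Fin 4) ℂ)
    (hA : LinearIndependent ℂ (fun r => A r)) :
    Module.finrank ℂ (kerOf A) = 2 := by
  have hrank : A.rank = 2 := by
    have ht : Aᵀ.rank = 2 := by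
      have hinj : Function.Injective Aᵀ.mulVecLin := by
        rw [← LinearMap.ker_eq_bot]
        rw [Submodule.eq_bot_iff]
        intro c hc
        simp only [LinearMap.mem_ker, Matrix.mulVecLin_apply] at hc
        have hc' : ∀ i, ∑ j, c j * A j i = 0 := by
          intro i
          have := congrFun hc i
          simpa [Matrix.mulVec, dotProduct, Matrix.transpose_apply, mul_comm]
            using this
        have := linearIndependent_iff'.1 hA Finset.univ c ?_
        · funext j; exact this j (Finset.mem_univ j)
        · funext i
          simpa using hc' i
      have := LinearMap.finrank_range_of_inj hinj
      rw [Matrix.rank, this]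
      simp
    rwa [Matrix.rank_transpose] at ht
  have hrn := LinearMap.finrank_range_add_finrank_ker A.mulVecLin
  rw [Matrix.rank] at hrank
  rw [hrank] at hrn
  simp only [Module.finrank_pi, Fintype.card_fin] at hrn
  have : Module.finrank ℂ (LinearMap.ker A.mulVecLin) = 2 := by omega
  exact this

lemma map_image_rep_mem (T : (Fin 4 → ℂ) ≃ₗ[ℂ] (Fin 4 → ℂ)) (K : Submodule ℂ (Fin 4 → ℂ)) :
    Projectivization.map T.toLinearMap T.injective '' {x : Pn 3 | x.rep ∈ K}
      = {y : Pn 3 | y.rep ∈ K.map T.toLinearMap} := by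
  ext y
  constructor
  · rintro ⟨x, hx, rfl⟩
    have hxr : x = Projectivization.mk ℂ x.rep x.rep_nonzero := (Projectivization.mk_rep x).symm
    rw [hxr, Projectivization.map_mk]
    simp only [Set.mem_setOf_eq]
    rw [rep_mk_mem_iff]
    exact ⟨x.rep, hx, rfl⟩
  · intro hy
    obtain ⟨v, hv, hvy⟩ := hy
    have hv0 : v ≠ 0 := by
      rintro rfl
      exact y.rep_nonzero (by simpa using hvy.symm)
    refine ⟨Projectivization.mk ℂ v hv0, ?_, ?_⟩
    · simp only [Set.mem_setOf_eq]
      rw [rep_mk_mem_iff]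
      exact hv
    · rw [Projectivization.map_mk]
      conv_rhs => rw [← Projectivization.mk_rep y]
      have : T.toLinearMap v = y.rep := hvy
      simp_rw [this]

lemma rep_linearIndependent_of_ne {x1 x2 : Pn 3} (h : x1 ≠ x2) :
    LinearIndependent ℂ ![x1.rep, x2.rep] := by
  rw [LinearIndependent.pair_iff]
  intro s t hst
  by_contra hc
  push_neg at hc
  have hs : s ≠ 0 := by
    intro hs0
    rw [hs0, zero_smul, zero_add, smul_eq_zero] at hst
    rcases hst with h' | h'
    · exact (hc hs0) h'
    · exact x2.rep_nonzero h'
  have hx1 : x1.rep = (s⁻¹ * -t) • x2.rep := by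
    have h' : s • x1.rep = (-t) • x2.rep := by
      rw [neg_smul, eq_neg_iff_add_eq_zero]
      exact hst
    have h'' := congrArg (fun v => s⁻¹ • v) h'
    simpa [smul_smul, inv_mul_cancel₀ hs] using h''
  apply h
  have : Projectivization.mk ℂ x1.rep x1.rep_nonzero
      = Projectivization.mk ℂ x2.rep x2.rep_nonzero :=
    (Projectivization.mk_eq_mk_iff' ℂ _ _ _ _).2 ⟨s⁻¹ * -t, hx1.symm⟩
  rw [Projectivization.mk_rep, Projectivization.mk_rep] at this
  exact this

lemma span_eq_of_finrank_two {K : Submodule ℂ (Fin 4 → ℂ)} {v1 v2 : Fin 4 → ℂ}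
    (hind : LinearIndependent ℂ ![v1, v2]) (h1 : v1 ∈ K) (h2 : v2 ∈ K)
    (hK : Module.finrank ℂ K = 2) : K = Submodule.span ℂ {v1, v2} := by
  have hle : Submodule.span ℂ {v1, v2} ≤ K := by
    rw [Submodule.span_le]
    rintro v (rfl | rfl)
    · exact h1
    · exact h2
  have hfr : Module.finrank ℂ (Submodule.span ℂ {v1, v2}) = 2 := by
    have : Set.range ![v1, v2] = ({v1, v2} : Set (Fin 4 → ℂ)) := by
      simp [Matrix.range_cons, Matrix.range_empty, Set.pair_comm]
    rw [← this, finrank_span_eq_card hind]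
    simp
  exact (Submodule.eq_of_le_of_finrank_le hle (by rw [hK, hfr])).symm

lemma map_linSet_eq (T : (Fin 4 → ℂ) ≃ₗ[ℂ] (Fin 4 → ℂ))
    {A B : Matrix (Fin 2) (Fin 4) ℂ}
    (hA : LinearIndependent ℂ (fun r => A r)) (hB : LinearIndependent ℂ (fun r => B r))
    {x1 x2 : Pn 3} (hx : x1 ≠ x2)
    (h1A : x1 ∈ linSet A) (h2A : x2 ∈ linSet A)
    (h1B : Projectivization.map T.toLinearMap T.injective x1 ∈ linSet B)
    (h2B : Projectivization.map T.toLinearMap T.injective x2 ∈ linSet B) :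
    Projectivization.map T.toLinearMap T.injective '' linSet A = linSet B := by
  have hind : LinearIndependent ℂ ![x1.rep, x2.rep] := rep_linearIndependent_of_ne hx
  have hKA : kerOf A = Submodule.span ℂ {x1.rep, x2.rep} :=
    span_eq_of_finrank_two hind ((mem_linSet_iff_rep A x1).1 h1A)
      ((mem_linSet_iff_rep A x2).1 h2A) (finrank_kerOf A hA)
  have hTind : LinearIndependent ℂ ![T x1.rep, T x2.rep] := by
    have := hind.map' T.toLinearMap T.ker
    have heq : (T.toLinearMap ∘ ![x1.rep, x2.rep]) = ![T x1.rep, T x2.rep] := by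
      funext i; fin_cases i <;> rfl
    rwa [heq] at this
  have hT1 : T x1.rep ∈ kerOf B := by
    have : Projectivization.map T.toLinearMap T.injective x1
        = Projectivization.mk ℂ (T.toLinearMap x1.rep)
          (by simpa using fun h => x1.rep_nonzero (by simpa using T.injective (by simpa using h))) := by
      conv_lhs => rw [← Projectivization.mk_rep x1]
      rw [Projectivization.map_mk]
    rw [this, mk_mem_linSet_iff] at h1B
    exact h1B
  have hT2 : T x2.rep ∈ kerOf B := by
    have : Projectivization.map T.toLinearMap T.injective x2
        = Projectivization.mk ℂ (T.toLinearMap x2.rep)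
          (by simpa using fun h => x2.rep_nonzero (by simpa using T.injective (by simpa using h))) := by
      conv_lhs => rw [← Projectivization.mk_rep x2]
      rw [Projectivization.map_mk]
    rw [this, mk_mem_linSet_iff] at h2B
    exact h2B
  have hKB : kerOf B = Submodule.span ℂ {T x1.rep, T x2.rep} :=
    span_eq_of_finrank_two hTind hT1 hT2 (finrank_kerOf B hB)
  have hmap : (kerOf A).map T.toLinearMap = kerOf B := by
    rw [hKA, hKB, Submodule.map_span]
    congr 1
    rw [Set.image_pair]
    rfl
  have hlinA : linSet A = {x : Pn 3 | x.rep ∈ kerOf A} := Set.ext (mem_linSet_iff_rep A)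
  have hlinB : linSet B = {x : Pn 3 | x.rep ∈ kerOf B} := Set.ext (mem_linSet_iff_rep B)
  rw [hlinA, hlinB, map_image_rep_mem, hmap]


def Fpoly (u : Matrix (Fin 4) (Fin 4) ℂ) (j : Fin 4) : Polynomial ℂ :=
  C (u j 0) * X ^ 3 + C (u j 1) * X ^ 2 + C (u j 2) * X + C (u j 3)

lemma Fpoly_eval (u : Matrix (Fin 4) (Fin 4) ℂ) (j : Fin 4) (t : ℂ) :
    (Fpoly u j).eval t = u.mulVec (vmon 3 t 1) j := by
  simp [Fpoly, Matrix.mulVec, dotProduct, vmon, Fin.sum_univ_four,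
    show ((3:Fin 4):ℕ) = 3 from rfl]

lemma cubic_coeff_eq {a3 a2 a1 a0 b3 b2 b1 b0 : ℂ}
    (h : C a3 * X ^ 3 + C a2 * X ^ 2 + C a1 * X + C a0
       = C b3 * X ^ 3 + C b2 * X ^ 2 + C b1 * X + C b0) :
    a3 = b3 ∧ a2 = b2 ∧ a1 = b1 ∧ a0 = b0 := by
  refine ⟨?_, ?_, ?_, ?_⟩
  · have := congrArg (fun p => Polynomial.coeff p 3) h; simpa using this
  · have := congrArg (fun p => Polynomial.coeff p 2) h; simpa using this
  · have := congrArg (fun p => Polynomial.coeff p 1) h; simpa using this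
  · have := congrArg (fun p => Polynomial.coeff p 0) h; simpa using this

lemma Fpoly_comb {u : Matrix (Fin 4) (Fin 4) ℂ} (hu : IsUnit u) (c : Fin 4 → ℂ)
    (h : C (c 0) * Fpoly u 0 + C (c 1) * Fpoly u 1 + C (c 2) * Fpoly u 2
        + C (c 3) * Fpoly u 3 = 0) : c = 0 := by
  have hcoeff : ∀ k : Fin 4, ∑ j, c j * u j k = 0 := by
    intro k
    fin_cases k
    · have := congrArg (fun p => Polynomial.coeff p 3) h
      simpa [Fpoly, Fin.sum_univ_four, mul_add, add_assoc] using this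
    · have := congrArg (fun p => Polynomial.coeff p 2) h
      simpa [Fpoly, Fin.sum_univ_four, mul_add, add_assoc] using this
    · have := congrArg (fun p => Polynomial.coeff p 1) h
      simpa [Fpoly, Fin.sum_univ_four, mul_add, add_assoc] using this
    · have := congrArg (fun p => Polynomial.coeff p 0) h
      simpa [Fpoly, Fin.sum_univ_four, mul_add, add_assoc] using this
  have hvm : c ᵥ* u = 0 := by
    funext k
    have := hcoeff k
    simpa [Matrix.vecMul, dotProduct] using this
  rcases isUnit_iff_exists.1 hu with ⟨v, h1, h2⟩
  have : c ᵥ* (u * v) = 0 ᵥ* v := by rw [← Matrix.vecMul_vecMul, hvm]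
  rwa [h1, Matrix.vecMul_one, Matrix.zero_vecMul] at this

lemma Fpoly_ne_zero {u : Matrix (Fin 4) (Fin 4) ℂ} (hu : IsUnit u) (j : Fin 4) :
    Fpoly u j ≠ 0 := by
  intro h
  have h0 : (0:ℂ) ≠ (1:ℂ) := by norm_num
  fin_cases j
  · have := Fpoly_comb hu ![1,0,0,0] (by simpa using h)
    exact h0 (by simpa using (congrFun this 0).symm)
  · have := Fpoly_comb hu ![0,1,0,0] (by simpa using h)
    exact h0 (by simpa using (congrFun this 1).symm)
  · have := Fpoly_comb hu ![0,0,1,0] (by simpa using h)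
    exact h0 (by simpa using (congrFun this 2).symm)
  · have := Fpoly_comb hu ![0,0,0,1] (by simpa using h)
    exact h0 (by simpa using (congrFun this 3).symm)

lemma Fpoly_no_common_root {u : Matrix (Fin 4) (Fin 4) ℂ} (hu : IsUnit u) (r : ℂ)
    (h : ∀ j, (Fpoly u j).eval r = 0) : False := by
  have : u.mulVec (vmon 3 r 1) = 0 := by
    funext j
    rw [← Fpoly_eval]
    exact h j
  exact mulVec_ne_zero hu (vmon_ne_zero (Or.inr one_ne_zero)) this

lemma core_lemma (u : Matrix (Fin 4) (Fin 4) ℂ) (hu : IsUnit u)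
    (hrel1 : Fpoly u 1 ^ 2 = Fpoly u 0 * Fpoly u 2)
    (hrel2 : Fpoly u 2 ^ 2 = Fpoly u 1 * Fpoly u 3) :
    ∃ m : Matrix (Fin 2) (Fin 2) ℂ, IsUnit m ∧ ∃ lam : ℂ, lam ≠ 0 ∧ ∀ a b : ℂ,
      u.mulVec (vmon 3 a b)
        = lam • vmon 3 (m 0 0 * a + m 0 1 * b) (m 1 0 * a + m 1 1 * b) := by
  set F0 := Fpoly u 0 with hF0def
  set F1 := Fpoly u 1 with hF1def
  set F2 := Fpoly u 2 with hF2def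
  set F3 := Fpoly u 3 with hF3def
  have hF0 : F0 ≠ 0 := Fpoly_ne_zero hu 0
  have hF1 : F1 ≠ 0 := Fpoly_ne_zero hu 1
  have hF2 : F2 ≠ 0 := Fpoly_ne_zero hu 2
  have hF3 : F3 ≠ 0 := Fpoly_ne_zero hu 3
  set g := GCDMonoid.gcd F1 F2 with hgdef
  have hg : g ≠ 0 := gcd_ne_zero_of_left hF1
  set p := F1 / g with hpdef
  set q := F2 / g with hqdef
  have hgp : g * p = F1 := EuclideanDomain.mul_div_cancel' hg (gcd_dvd_left F1 F2)
  have hgq : g * q = F2 := EuclideanDomain.mul_div_cancel' hg (gcd_dvd_right F1 F2)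
  have hp : p ≠ 0 := fun h => hF1 (by rw [← hgp, h, mul_zero])
  have hq : q ≠ 0 := fun h => hF2 (by rw [← hgq, h, mul_zero])
  have hcop : IsCoprime p q := isCoprime_div_gcd_div_gcd hF2
  -- g * p^2 = F0 * q
  have e1 : g * (g * p ^ 2) = g * (F0 * q) := by
    calc g * (g * p ^ 2) = (g * p) ^ 2 := by ring
    _ = F0 * F2 := by rw [hgp]; exact hrel1
    _ = g * (F0 * q) := by rw [← hgq]; ring
  have e1' : g * p ^ 2 = F0 * q := mul_left_cancel₀ hg e1
  -- g * q^2 = F3 * p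
  have e2 : g * (g * q ^ 2) = g * (F3 * p) := by
    calc g * (g * q ^ 2) = (g * q) ^ 2 := by ring
    _ = F1 * F3 := by rw [hgq]; exact hrel2
    _ = g * (F3 * p) := by rw [← hgp]; ring
  have e2' : g * q ^ 2 = F3 * p := mul_left_cancel₀ hg e2
  have hqg : q ∣ g := by
    have : q ∣ g * p ^ 2 := ⟨F0, by rw [e1']; ring⟩
    exact (hcop.symm.pow_right).dvd_of_dvd_mul_right this
  have hpg : p ∣ g := by
    have : p ∣ g * q ^ 2 := ⟨F3, by rw [e2']; ring⟩
    exact (hcop.pow_right).dvd_of_dvd_mul_right this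
  obtain ⟨h, hh⟩ : p * q ∣ g := hcop.mul_dvd hpg hqg
  have hhne : h ≠ 0 := by
    intro h0
    rw [h0, mul_zero] at hh
    exact hg hh
  -- the four factorizations
  have hfF0 : F0 = p ^ 3 * h := by
    have : q * F0 = q * (p ^ 3 * h) := by
      calc q * F0 = g * p ^ 2 := by rw [e1']; ring
      _ = (p * q * h) * p ^ 2 := by rw [← hh]
      _ = q * (p ^ 3 * h) := by ring
    exact mul_left_cancel₀ hq this
  have hfF3 : F3 = q ^ 3 * h := by
    have : p * F3 = p * (q ^ 3 * h) := by
      calc p * F3 = g * q ^ 2 := by rw [e2']; ring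
      _ = (p * q * h) * q ^ 2 := by rw [← hh]
      _ = p * (q ^ 3 * h) := by ring
    exact mul_left_cancel₀ hp this
  have hfF1 : F1 = p ^ 2 * q * h := by rw [← hgp, hh]; ring
  have hfF2 : F2 = p * q ^ 2 * h := by rw [← hgq, hh]; ring
  -- h is a nonzero constant
  have hconst : h.degree ≤ 0 := by
    by_contra hdeg
    push_neg at hdeg
    obtain ⟨r, hr⟩ := Complex.exists_root hdeg
    apply Fpoly_no_common_root hu r
    intro j
    have hhr : h.eval r = 0 := hr
    fin_cases j
    · show eval r (Fpoly u 0) = 0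
      rw [← hF0def, hfF0]; simp [hhr]
    · show eval r (Fpoly u 1) = 0
      rw [← hF1def, hfF1]; simp [hhr]
    · show eval r (Fpoly u 2) = 0
      rw [← hF2def, hfF2]; simp [hhr]
    · show eval r (Fpoly u 3) = 0
      rw [← hF3def, hfF3]; simp [hhr]
  obtain ⟨lam, hlam⟩ : ∃ lam : ℂ, h = C lam := ⟨h.coeff 0, (Polynomial.eq_C_of_degree_le_zero hconst)⟩
  have hlamne : lam ≠ 0 := by
    intro h0
    rw [h0, map_zero] at hlam
    exact hhne hlam
  -- degree bounds on p and q
  have hdF : ∀ j, (Fpoly u j).natDegree ≤ 3 := by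
    intro j
    unfold Fpoly
    compute_degree
  have hdp : p.natDegree ≤ 1 := by
    have h3 : F0.natDegree = 3 * p.natDegree := by
      rw [hfF0, hlam, natDegree_mul (pow_ne_zero _ hp) (by simpa [hlam] using hhne),
        natDegree_pow, natDegree_C]
      ring
    have := hdF 0
    rw [← hF0def] at this
    omega
  have hdq : q.natDegree ≤ 1 := by
    have h3 : F3.natDegree = 3 * q.natDegree := by
      rw [hfF3, hlam, natDegree_mul (pow_ne_zero _ hq) (by simpa [hlam] using hhne),
        natDegree_pow, natDegree_C]
      ring
    have := hdF 3
    rw [← hF3def] at this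
    omega
  -- write p and q as explicit linear polynomials
  have hdp' : p.degree ≤ 1 := Polynomial.natDegree_le_iff_degree_le.1 hdp
  have hdq' : q.degree ≤ 1 := Polynomial.natDegree_le_iff_degree_le.1 hdq
  set p1 := p.coeff 1 with hp1def
  set p0 := p.coeff 0 with hp0def
  set q1 := q.coeff 1 with hq1def
  set q0 := q.coeff 0 with hq0def
  have hpeq : p = C p1 * X + C p0 := Polynomial.eq_X_add_C_of_degree_le_one hdp'
  have hqeq : q = C q1 * X + C q0 := Polynomial.eq_X_add_C_of_degree_le_one hdq'
  -- the determinant is nonzero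
  have hdet : p1 * q0 - p0 * q1 ≠ 0 := by
    intro hdet0
    obtain ⟨α, hqα⟩ : ∃ α : ℂ, q = C α * p := by
      by_cases hp1 : p1 = 0
      · have hp0 : p0 ≠ 0 := by
          intro h0
          apply hp
          rw [hpeq, hp1, h0]
          simp
        have hq1 : q1 = 0 := by
          rw [hp1] at hdet0
          have : p0 * q1 = 0 := by linear_combination -hdet0
          rcases mul_eq_zero.1 this with h' | h'
          · exact absurd h' hp0
          · exact h'
        refine ⟨q0 / p0, ?_⟩
        rw [hqeq, hpeq, hp1, hq1]
        simp only [_root_.map_zero, zero_mul, zero_add]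
        rw [← _root_.map_mul, div_mul_cancel₀ _ hp0]
      · refine ⟨q1 / p1, ?_⟩
        have hq0 : q0 = q1 / p1 * p0 := by
          field_simp
          linear_combination hdet0
        rw [hqeq, hpeq, mul_add, ← mul_assoc, ← _root_.map_mul, div_mul_cancel₀ _ hp1,
          ← _root_.map_mul, ← hq0]
    have hcomb := Fpoly_comb hu ![α ^ 2, 0, -1, 0] (by
      show C (α ^ 2) * Fpoly u 0 + C (0:ℂ) * Fpoly u 1 + C (-1 : ℂ) * Fpoly u 2
        + C (0:ℂ) * Fpoly u 3 = 0
      rw [← hF0def, ← hF1def, ← hF2def, ← hF3def, hfF2, hqα, hfF0]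
      simp only [_root_.map_pow, _root_.map_neg, _root_.map_one, Polynomial.C_0]
      ring)
    have := congrFun hcomb 2
    simp at this
  refine ⟨!![p1, p0; q1, q0], ?_, lam, hlamne, ?_⟩
  · rw [Matrix.isUnit_iff_isUnit_det, Matrix.det_fin_two_of, isUnit_iff_ne_zero]
    exact hdet
  -- coefficient identities
  have hx0 : C (u 0 0) * X ^ 3 + C (u 0 1) * X ^ 2 + C (u 0 2) * X + C (u 0 3)
      = C (lam * p1 ^ 3) * X ^ 3 + C (3 * lam * p1 ^ 2 * p0) * X ^ 2
        + C (3 * lam * p1 * p0 ^ 2) * X + C (lam * p0 ^ 3) := by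
    have : F0 = C (lam * p1 ^ 3) * X ^ 3 + C (3 * lam * p1 ^ 2 * p0) * X ^ 2
        + C (3 * lam * p1 * p0 ^ 2) * X + C (lam * p0 ^ 3) := by
      rw [hfF0, hlam, hpeq]
      simp only [_root_.map_mul, _root_.map_pow, _root_.map_add, _root_.map_ofNat]
      ring
    exact this
  have hx1 : C (u 1 0) * X ^ 3 + C (u 1 1) * X ^ 2 + C (u 1 2) * X + C (u 1 3)
      = C (lam * p1 ^ 2 * q1) * X ^ 3 + C (lam * (p1 ^ 2 * q0 + 2 * p1 * p0 * q1)) * X ^ 2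
        + C (lam * (p0 ^ 2 * q1 + 2 * p1 * p0 * q0)) * X + C (lam * p0 ^ 2 * q0) := by
    have : F1 = C (lam * p1 ^ 2 * q1) * X ^ 3
        + C (lam * (p1 ^ 2 * q0 + 2 * p1 * p0 * q1)) * X ^ 2
        + C (lam * (p0 ^ 2 * q1 + 2 * p1 * p0 * q0)) * X + C (lam * p0 ^ 2 * q0) := by
      rw [hfF1, hlam, hpeq, hqeq]
      simp only [_root_.map_mul, _root_.map_pow, _root_.map_add, _root_.map_ofNat]
      ring
    exact this
  have hx2 : C (u 2 0) * X ^ 3 + C (u 2 1) * X ^ 2 + C (u 2 2) * X + C (u 2 3)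
      = C (lam * p1 * q1 ^ 2) * X ^ 3 + C (lam * (q1 ^ 2 * p0 + 2 * q1 * q0 * p1)) * X ^ 2
        + C (lam * (q0 ^ 2 * p1 + 2 * q1 * q0 * p0)) * X + C (lam * q0 ^ 2 * p0) := by
    have : F2 = C (lam * p1 * q1 ^ 2) * X ^ 3
        + C (lam * (q1 ^ 2 * p0 + 2 * q1 * q0 * p1)) * X ^ 2
        + C (lam * (q0 ^ 2 * p1 + 2 * q1 * q0 * p0)) * X + C (lam * q0 ^ 2 * p0) := by
      rw [hfF2, hlam, hpeq, hqeq]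
      simp only [_root_.map_mul, _root_.map_pow, _root_.map_add, _root_.map_ofNat]
      ring
    exact this
  have hx3 : C (u 3 0) * X ^ 3 + C (u 3 1) * X ^ 2 + C (u 3 2) * X + C (u 3 3)
      = C (lam * q1 ^ 3) * X ^ 3 + C (3 * lam * q1 ^ 2 * q0) * X ^ 2
        + C (3 * lam * q1 * q0 ^ 2) * X + C (lam * q0 ^ 3) := by
    have : F3 = C (lam * q1 ^ 3) * X ^ 3 + C (3 * lam * q1 ^ 2 * q0) * X ^ 2
        + C (3 * lam * q1 * q0 ^ 2) * X + C (lam * q0 ^ 3) := by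
      rw [hfF3, hlam, hqeq]
      simp only [_root_.map_mul, _root_.map_pow, _root_.map_add, _root_.map_ofNat]
      ring
    exact this
  obtain ⟨e00, e01, e02, e03⟩ := cubic_coeff_eq hx0
  obtain ⟨e10, e11, e12, e13⟩ := cubic_coeff_eq hx1
  obtain ⟨e20, e21, e22, e23⟩ := cubic_coeff_eq hx2
  obtain ⟨e30, e31, e32, e33⟩ := cubic_coeff_eq hx3
  intro a b
  funext i
  fin_cases i
  · show u.mulVec (vmon 3 a b) 0 = _
    simp only [Matrix.mulVec, dotProduct, vmon, Fin.sum_univ_four, Pi.smul_apply,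
      smul_eq_mul, Matrix.of_apply, Matrix.cons_val', Matrix.cons_val_zero, Matrix.cons_val_one,
      Matrix.head_cons, Matrix.empty_val', Matrix.cons_val_fin_one, Matrix.head_fin_const,
      show ((0:Fin 4):ℕ) = 0 from rfl, show ((1:Fin 4):ℕ) = 1 from rfl,
      show ((2:Fin 4):ℕ) = 2 from rfl, show ((3:Fin 4):ℕ) = 3 from rfl]
    rw [e00, e01, e02, e03]
    ring
  · show u.mulVec (vmon 3 a b) 1 = _
    simp only [Matrix.mulVec, dotProduct, vmon, Fin.sum_univ_four, Pi.smul_apply,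
      smul_eq_mul, Matrix.of_apply, Matrix.cons_val', Matrix.cons_val_zero, Matrix.cons_val_one,
      Matrix.head_cons, Matrix.empty_val', Matrix.cons_val_fin_one, Matrix.head_fin_const,
      show ((0:Fin 4):ℕ) = 0 from rfl, show ((1:Fin 4):ℕ) = 1 from rfl,
      show ((2:Fin 4):ℕ) = 2 from rfl, show ((3:Fin 4):ℕ) = 3 from rfl]
    rw [e10, e11, e12, e13]
    ring
  · show u.mulVec (vmon 3 a b) 2 = _
    simp only [Matrix.mulVec, dotProduct, vmon, Fin.sum_univ_four, Pi.smul_apply,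
      smul_eq_mul, Matrix.of_apply, Matrix.cons_val', Matrix.cons_val_zero, Matrix.cons_val_one,
      Matrix.head_cons, Matrix.empty_val', Matrix.cons_val_fin_one, Matrix.head_fin_const,
      show ((0:Fin 4):ℕ) = 0 from rfl, show ((1:Fin 4):ℕ) = 1 from rfl,
      show ((2:Fin 4):ℕ) = 2 from rfl, show ((3:Fin 4):ℕ) = 3 from rfl]
    rw [e20, e21, e22, e23]
    ring
  · show u.mulVec (vmon 3 a b) 3 = _
    simp only [Matrix.mulVec, dotProduct, vmon, Fin.sum_univ_four, Pi.smul_apply,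
      smul_eq_mul, Matrix.of_apply, Matrix.cons_val', Matrix.cons_val_zero, Matrix.cons_val_one,
      Matrix.head_cons, Matrix.empty_val', Matrix.cons_val_fin_one, Matrix.head_fin_const,
      show ((0:Fin 4):ℕ) = 0 from rfl, show ((1:Fin 4):ℕ) = 1 from rfl,
      show ((2:Fin 4):ℕ) = 2 from rfl, show ((3:Fin 4):ℕ) = 3 from rfl]
    rw [e30, e31, e32, e33]
    ring

lemma mk_eq_of_eq {v w : Fin 4 → ℂ} (h : v = w) (hv : v ≠ 0) :
    Projectivization.mk ℂ v hv = Projectivization.mk ℂ w (h ▸ hv) := by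
  subst h; rfl

lemma mk_smul_eq {v : Fin 4 → ℂ} {c : ℂ} (_hc : c ≠ 0) (hv : c • v ≠ 0) (hv' : v ≠ 0) :
    Projectivization.mk ℂ (c • v) hv = Projectivization.mk ℂ v hv' :=
  (Projectivization.mk_eq_mk_iff' ℂ _ _ _ _).2 ⟨c, rfl⟩

lemma mulVec_toMatrix' (T : (Fin 4 → ℂ) ≃ₗ[ℂ] (Fin 4 → ℂ)) (v : Fin 4 → ℂ) :
    (LinearMap.toMatrix' T.toLinearMap).mulVec v = T v := by
  rw [← Matrix.toLin'_apply, Matrix.toLin'_toMatrix']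
  rfl

lemma isUnit_toMatrix' (T : (Fin 4 → ℂ) ≃ₗ[ℂ] (Fin 4 → ℂ)) :
    IsUnit (LinearMap.toMatrix' T.toLinearMap) := by
  apply isUnit_iff_exists.2 ⟨LinearMap.toMatrix' T.symm.toLinearMap, ?_, ?_⟩
  · rw [← LinearMap.toMatrix'_comp]
    have : T.toLinearMap.comp T.symm.toLinearMap = LinearMap.id := by
      refine LinearMap.ext fun v => ?_
      show T (T.symm v) = v
      exact T.apply_symm_apply v
    rw [this, LinearMap.toMatrix'_id]
  · rw [← LinearMap.toMatrix'_comp]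
    have : T.symm.toLinearMap.comp T.toLinearMap = LinearMap.id := by
      refine LinearMap.ext fun v => ?_
      show T.symm (T v) = v
      exact T.symm_apply_apply v
    rw [this, LinearMap.toMatrix'_id]

lemma map_rncOf (T : (Fin 4 → ℂ) ≃ₗ[ℂ] (Fin 4 → ℂ)) (g : Matrix (Fin 4) (Fin 4) ℂ) :
    Projectivization.map T.toLinearMap T.injective '' rncOf 3 g
      = rncOf 3 (LinearMap.toMatrix' T.toLinearMap * g) := by
  set t := LinearMap.toMatrix' T.toLinearMap with ht
  ext y
  constructor
  · rintro ⟨x, ⟨a, b, hab, hne, rfl⟩, rfl⟩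
    have hne' : (t * g).mulVec (vmon 3 a b) ≠ 0 := by
      rw [← Matrix.mulVec_mulVec, mulVec_toMatrix']
      intro hz
      exact hne (by simpa using T.injective (by simpa using hz))
    refine ⟨a, b, hab, hne', ?_⟩
    rw [Projectivization.map_mk]
    apply mk_eq_of_eq
    show T.toLinearMap (g.mulVec (vmon 3 a b)) = _
    rw [← Matrix.mulVec_mulVec, mulVec_toMatrix']
    rfl
  · rintro ⟨a, b, hab, hne, rfl⟩
    have hne' : g.mulVec (vmon 3 a b) ≠ 0 := by
      intro hz
      apply hne
      rw [← Matrix.mulVec_mulVec, hz, Matrix.mulVec_zero]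
    refine ⟨Projectivization.mk ℂ (g.mulVec (vmon 3 a b)) hne', ⟨a, b, hab, hne', rfl⟩, ?_⟩
    rw [Projectivization.map_mk]
    apply mk_eq_of_eq
    show T.toLinearMap (g.mulVec (vmon 3 a b)) = _
    rw [← Matrix.mulVec_mulVec, mulVec_toMatrix']
    rfl

end Aux

theorem proj_equiv_iff_nine_points_equiv
    (gA gB : Matrix (Fin 4) (Fin 4) ℂ) (hgA : IsUnit gA) (hgB : IsUnit gB)
    (P Q : Fin 3 → Pn 3)
    (LA LB : Fin 3 → Matrix (Fin 2) (Fin 4) ℂ)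
    (hLA : ∀ i, LinearIndependent ℂ (fun r => LA i r))
    (hLB : ∀ i, LinearIndependent ℂ (fun r => LB i r))
    (hPA : ∀ i, P i ∈ rncOf 3 gA) (hQB : ∀ i, Q i ∈ rncOf 3 gB)
    (hsecA : ∀ i, MeetsIn 2 (linSet (LA i)) (rncOf 3 gA))
    (hsecB : ∀ i, MeetsIn 2 (linSet (LB i)) (rncOf 3 gB))
    (huniqA : ∀ C : Set (Pn 3), IsRNC 3 C → (∀ i, P i ∈ C) →
      (∀ i, MeetsIn 2 (linSet (LA i)) C) → C = rncOf 3 gA)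
    (huniqB : ∀ C : Set (Pn 3), IsRNC 3 C → (∀ i, Q i ∈ C) →
      (∀ i, MeetsIn 2 (linSet (LB i)) C) → C = rncOf 3 gB) :
    (∃ T : (Fin 4 → ℂ) ≃ₗ[ℂ] (Fin 4 → ℂ),
      (∀ i, Projectivization.map T.toLinearMap T.injective (P i) = Q i) ∧
      (∀ i, Projectivization.map T.toLinearMap T.injective '' linSet (LA i)
        = linSet (LB i))) ↔
    (∃ m : Matrix (Fin 2) (Fin 2) ℂ, IsUnit m ∧
      ∀ a b : ℂ, (a ≠ 0 ∨ b ≠ 0) →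
        ∀ (h₁ : gA.mulVec (vmon 3 a b) ≠ 0)
          (h₂ : gB.mulVec (vmon 3 (m 0 0 * a + m 0 1 * b) (m 1 0 * a + m 1 1 * b)) ≠ 0),
          (∀ i, (Projectivization.mk ℂ (gA.mulVec (vmon 3 a b)) h₁ = P i ↔
            Projectivization.mk ℂ
              (gB.mulVec (vmon 3 (m 0 0 * a + m 0 1 * b) (m 1 0 * a + m 1 1 * b))) h₂
              = Q i)) ∧
          (∀ i, (Projectivization.mk ℂ (gA.mulVec (vmon 3 a b)) h₁ ∈ linSet (LA i) ↔
            Projectivization.mk ℂ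
              (gB.mulVec (vmon 3 (m 0 0 * a + m 0 1 * b) (m 1 0 * a + m 1 1 * b))) h₂
              ∈ linSet (LB i)))) := by
  constructor
  · -- forward direction
    rintro ⟨T, hTP, hTL⟩
    set t := LinearMap.toMatrix' T.toLinearMap with htdef
    have htu : IsUnit t := isUnit_toMatrix' T
    have hinj := Projectivization.map_injective T.toLinearMap T.injective
    have himg : Projectivization.map T.toLinearMap T.injective '' rncOf 3 gA
        = rncOf 3 (t * gA) := map_rncOf T gA
    have htgAu : IsUnit (t * gA) := htu.mul hgA
    have hC : rncOf 3 (t * gA) = rncOf 3 gB := by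
      apply huniqB
      · exact ⟨t * gA, htgAu, rfl⟩
      · intro i
        rw [← himg]
        exact ⟨P i, hPA i, hTP i⟩
      · intro i
        have heqset : linSet (LB i) ∩ rncOf 3 (t * gA)
            = Projectivization.map T.toLinearMap T.injective ''
              (linSet (LA i) ∩ rncOf 3 gA) := by
          rw [Set.image_inter hinj, himg, hTL i]
        rcases hsecA i with ⟨hfin, hcard⟩
        constructor
        · rw [heqset]; exact hfin.image _
        · rw [heqset, Set.ncard_image_of_injective _ hinj]; exact hcard
    have hdetB : IsUnit gB.det := (Matrix.isUnit_iff_isUnit_det gB).1 hgB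
    set u := gB⁻¹ * (t * gA) with hudef
    have hgBu : gB * u = t * gA := by
      rw [hudef, ← mul_assoc, Matrix.mul_nonsing_inv gB hdetB, one_mul]
    have huu : IsUnit u := ((Matrix.isUnit_nonsing_inv_iff).2 hgB).mul htgAu
    have hrel : ∀ s : ℂ, ∃ c d μ : ℂ, u.mulVec (vmon 3 s 1) = μ • vmon 3 c d := by
      intro s
      have h1 : (t * gA).mulVec (vmon 3 s 1) ≠ 0 :=
        mulVec_ne_zero htgAu (vmon_ne_zero (Or.inr one_ne_zero))
      have hx : Projectivization.mk ℂ ((t * gA).mulVec (vmon 3 s 1)) h1 ∈ rncOf 3 (t * gA) :=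
        ⟨s, 1, Or.inr one_ne_zero, h1, rfl⟩
      rw [hC] at hx
      obtain ⟨c, d, hcd, h2, heq⟩ := hx
      obtain ⟨μ, hμ⟩ := (Projectivization.mk_eq_mk_iff ℂ _ _ h1 h2).1 heq
      refine ⟨c, d, (μ : ℂ), ?_⟩
      have h3 : u.mulVec (vmon 3 s 1) = gB⁻¹.mulVec ((t * gA).mulVec (vmon 3 s 1)) := by
        rw [Matrix.mulVec_mulVec, hudef]
      rw [h3, ← hμ, Units.smul_def, Matrix.mulVec_smul, Matrix.mulVec_mulVec,
        Matrix.nonsing_inv_mul gB hdetB, Matrix.one_mulVec]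
    have hrel1 : Fpoly u 1 ^ 2 = Fpoly u 0 * Fpoly u 2 := by
      apply Polynomial.funext
      intro s
      obtain ⟨c, d, μ, heq⟩ := hrel s
      rw [Polynomial.eval_pow, Polynomial.eval_mul, Fpoly_eval, Fpoly_eval, Fpoly_eval, heq]
      simp only [Pi.smul_apply, smul_eq_mul, vmon,
        show ((0 : Fin 4) : ℕ) = 0 from rfl, show ((1 : Fin 4) : ℕ) = 1 from rfl,
        show ((2 : Fin 4) : ℕ) = 2 from rfl]
      ring
    have hrel2 : Fpoly u 2 ^ 2 = Fpoly u 1 * Fpoly u 3 := by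
      apply Polynomial.funext
      intro s
      obtain ⟨c, d, μ, heq⟩ := hrel s
      rw [Polynomial.eval_pow, Polynomial.eval_mul, Fpoly_eval, Fpoly_eval, Fpoly_eval, heq]
      simp only [Pi.smul_apply, smul_eq_mul, vmon,
        show ((1 : Fin 4) : ℕ) = 1 from rfl, show ((2 : Fin 4) : ℕ) = 2 from rfl,
        show ((3 : Fin 4) : ℕ) = 3 from rfl]
      ring
    obtain ⟨m, hm, lam, hlam0, hid⟩ := core_lemma u huu hrel1 hrel2
    refine ⟨m, hm, ?_⟩
    intro a b hab h₁ h₂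
    have hkey : Projectivization.map T.toLinearMap T.injective
        (Projectivization.mk ℂ (gA.mulVec (vmon 3 a b)) h₁)
        = Projectivization.mk ℂ
            (gB.mulVec (vmon 3 (m 0 0 * a + m 0 1 * b) (m 1 0 * a + m 1 1 * b))) h₂ := by
      rw [Projectivization.map_mk]
      have e1 : T.toLinearMap (gA.mulVec (vmon 3 a b))
          = lam • gB.mulVec (vmon 3 (m 0 0 * a + m 0 1 * b) (m 1 0 * a + m 1 1 * b)) := by
        show T (gA.mulVec (vmon 3 a b)) = _
        rw [← mulVec_toMatrix' T, ← htdef, Matrix.mulVec_mulVec, ← hgBu,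
          ← Matrix.mulVec_mulVec, hid a b, Matrix.mulVec_smul]
      rw [mk_eq_of_eq e1]
      exact mk_smul_eq hlam0 _ h₂
    constructor
    · intro i
      constructor
      · intro hPi
        rw [← hkey, hPi, hTP i]
      · intro hQi
        apply hinj
        rw [hkey, hQi, hTP i]
    · intro i
      constructor
      · intro hmem
        rw [← hTL i] at *
        rw [← hkey]
        exact Set.mem_image_of_mem _ hmem
      · intro hmem
        rw [← hTL i, ← hkey] at hmem
        exact hinj.mem_set_image.1 hmem
  · -- backward direction
    rintro ⟨m, hm, hmain⟩
    obtain ⟨n, hn1, hn2⟩ := isUnit_iff_exists.1 hm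
    have hdetA : IsUnit gA.det := (Matrix.isUnit_iff_isUnit_det gA).1 hgA
    have hdetB : IsUnit gB.det := (Matrix.isUnit_iff_isUnit_det gB).1 hgB
    set t := gB * sym3 m * gA⁻¹ with htdef
    set t' := gA * sym3 n * gB⁻¹ with ht'def
    have htt' : t * t' = 1 := by
      rw [htdef, ht'def]
      calc gB * sym3 m * gA⁻¹ * (gA * sym3 n * gB⁻¹)
          = gB * sym3 m * (gA⁻¹ * gA) * sym3 n * gB⁻¹ := by
            simp only [mul_assoc]
        _ = gB * (sym3 m * sym3 n) * gB⁻¹ := by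
            rw [Matrix.nonsing_inv_mul gA hdetA, mul_one]
            simp only [mul_assoc]
        _ = 1 := by rw [sym3_mul, hn1, sym3_one, mul_one, Matrix.mul_nonsing_inv gB hdetB]
    have ht't : t' * t = 1 := by
      rw [htdef, ht'def]
      calc gA * sym3 n * gB⁻¹ * (gB * sym3 m * gA⁻¹)
          = gA * sym3 n * (gB⁻¹ * gB) * sym3 m * gA⁻¹ := by
            simp only [mul_assoc]
        _ = gA * (sym3 n * sym3 m) * gA⁻¹ := by
            rw [Matrix.nonsing_inv_mul gB hdetB, mul_one]
            simp only [mul_assoc]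
        _ = 1 := by rw [sym3_mul, hn2, sym3_one, mul_one, Matrix.mul_nonsing_inv gA hdetA]
    set T : (Fin 4 → ℂ) ≃ₗ[ℂ] (Fin 4 → ℂ) :=
      LinearEquiv.ofLinear (Matrix.toLin' t) (Matrix.toLin' t')
        (by rw [← Matrix.toLin'_mul, htt', Matrix.toLin'_one])
        (by rw [← Matrix.toLin'_mul, ht't, Matrix.toLin'_one]) with hTdef
    have hh₂ : ∀ a b : ℂ, (a ≠ 0 ∨ b ≠ 0) →
        gB.mulVec (vmon 3 (m 0 0 * a + m 0 1 * b) (m 1 0 * a + m 1 1 * b)) ≠ 0 := by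
      intro a b hab
      apply mulVec_ne_zero hgB
      apply vmon_ne_zero
      by_contra hcon
      push_neg at hcon
      obtain ⟨hc1, hc2⟩ := hcon
      have hmv : m.mulVec ![a, b] = 0 := by
        funext i
        fin_cases i
        · simpa [Matrix.mulVec, dotProduct, Fin.sum_univ_two] using hc1
        · simpa [Matrix.mulVec, dotProduct, Fin.sum_univ_two] using hc2
      have hab0 : (![a, b] : Fin 2 → ℂ) = 0 := by
        have : (n * m).mulVec ![a, b] = 0 := by
          rw [← Matrix.mulVec_mulVec, hmv, Matrix.mulVec_zero]
        rwa [hn2, Matrix.one_mulVec] at this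
      rcases hab with h | h
      · exact h (by simpa using congrFun hab0 0)
      · exact h (by simpa using congrFun hab0 1)
    have hkey : ∀ (a b : ℂ) (h₁ : gA.mulVec (vmon 3 a b) ≠ 0)
        (h₂ : gB.mulVec (vmon 3 (m 0 0 * a + m 0 1 * b) (m 1 0 * a + m 1 1 * b)) ≠ 0),
        Projectivization.map T.toLinearMap T.injective
          (Projectivization.mk ℂ (gA.mulVec (vmon 3 a b)) h₁)
        = Projectivization.mk ℂ
            (gB.mulVec (vmon 3 (m 0 0 * a + m 0 1 * b) (m 1 0 * a + m 1 1 * b))) h₂ := by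
      intro a b h₁ h₂
      rw [Projectivization.map_mk]
      apply mk_eq_of_eq
      show Matrix.toLin' t (gA.mulVec (vmon 3 a b)) = _
      rw [Matrix.toLin'_apply, Matrix.mulVec_mulVec, htdef]
      have : gB * sym3 m * gA⁻¹ * gA = gB * sym3 m := by
        rw [mul_assoc, Matrix.nonsing_inv_mul gA hdetA, mul_one]
      rw [this, ← Matrix.mulVec_mulVec, sym3_vmon]
    refine ⟨T, ?_, ?_⟩
    · intro i
      obtain ⟨a, b, hab, h₁, hPi⟩ := hPA i
      have h₂ := hh₂ a b hab
      rw [hPi, hkey a b h₁ h₂]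
      exact ((hmain a b hab h₁ h₂).1 i).1 hPi.symm
    · intro i
      obtain ⟨hfin, hcard⟩ := hsecA i
      obtain ⟨x1, x2, hne, hpair⟩ := Set.ncard_eq_two.1 hcard
      have hx1 : x1 ∈ linSet (LA i) ∩ rncOf 3 gA := by rw [hpair]; left; rfl
      have hx2 : x2 ∈ linSet (LA i) ∩ rncOf 3 gA := by rw [hpair]; right; rfl
      have himg : ∀ x, x ∈ linSet (LA i) ∩ rncOf 3 gA →
          Projectivization.map T.toLinearMap T.injective x ∈ linSet (LB i) := by
        rintro x ⟨hxL, a, b, hab, h₁, rfl⟩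
        have h₂ := hh₂ a b hab
        rw [hkey a b h₁ h₂]
        exact ((hmain a b hab h₁ h₂).2 i).1 hxL
      exact map_linSet_eq T (hLA i) (hLB i) hne hx1.1 hx2.1 (himg x1 hx1) (himg x2 hx2)

end
end
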